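/- arXiv:1812.03951 — 3 statements merged into one kernel-verified Lean document; each statement's English description precedes it below -/
import Mathlib

section
/- Let 2 ≤ p < ∞ and let X be a complex Banach space. Suppose that for every sequence (x_n)_{n∈ℕ} ⊂ X there exists a constant C ≥ 1 (possibly depending on the sequence) such that E_ε ‖∑_{n=1}^N ε_n a_n x_n n^{-s}‖_{H_p(X)} ≤ C ‖∑_{n=1}^N a_n x_n n^{-s}‖_{H_p(X)} for all N and all scalars a_1,…,a_N ∈ ℂ. Then there exists a single constant C ≥ 1 such that E_ε ‖∑_{n=1}^N ε_n x_n n^{-s}‖_{H_p(X)} ≤ C ‖∑_{n=1}^N x_n n^{-s}‖_{H_p(X)} for every N and every x_1,…,x_N ∈ X. -/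
open MeasureTheory TopologicalSpace

noncomputable section

instance : MeasurableSpace Circle := borel Circle
instance : BorelSpace Circle := ⟨rfl⟩

/-- The Haar probability measure on the circle `𝕋 = {z : ℂ, |z| = 1}`. -/
def muT : Measure Circle := Measure.haarMeasure ⊤

/-- The Haar probability measure on the infinite polytorus `𝕋^ℕ`
(equivalently, the product of the Haar probability measures of the factors). -/
def muTN : Measure (ℕ → Circle) := Measure.haarMeasure ⊤

instance : IsProbabilityMeasure muT := by
  constructor
  simpa [muT] using Measure.haarMeasure_self (K₀ := (⊤ : PositiveCompacts Circle))

instance : IsProbabilityMeasure muTN := by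
  constructor
  simpa [muTN] using Measure.haarMeasure_self (K₀ := (⊤ : PositiveCompacts (ℕ → Circle)))

/-- The monomial `z ↦ z^{α(n)}`, where `α(n)` is the finitely supported sequence of exponents
in the prime factorization `n = ∏_i pᵢ^{αᵢ(n)}`, the primes `pᵢ = Nat.nth Nat.Prime i` being
listed in increasing order.  (For `n ≥ 1`, every prime factor of `n` is among the first `n`
primes, so the range `Finset.range n` captures all nonzero exponents.) -/
def mon (n : ℕ) (z : ℕ → Circle) : ℂ :=
  ∏ i ∈ Finset.range n, (z i : ℂ) ^ (Nat.factorization n (Nat.nth Nat.Prime i))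

/-- The complex sign `±1` associated to a boolean sign choice. -/
def sgn {N : ℕ} (ε : Fin N → Bool) (n : Fin N) : ℂ := if ε n then 1 else -1

/-- The average `E_ε = 2^{-N} ∑_{ε ∈ {-1,1}^N}` over all choices of `N` signs. -/
def Eavg (N : ℕ) (F : (Fin N → Bool) → ℝ) : ℝ :=
  (2 ^ N : ℝ)⁻¹ * ∑ ε : Fin N → Bool, F ε

/-- The `H_p(X)`-norm of the Dirichlet polynomial `∑_{n=1}^N x_n n^{-s}`, defined via the Bohr
transform as `(∫_{𝕋^ℕ} ‖∑_{n=1}^N x_n z^{α(n)}‖_X^p dz)^{1/p}`.  Here, for `n : Fin N`,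
`x n` is the coefficient of `((n : ℕ) + 1)^{-s}`. -/
def Hnorm (p : ℝ) {X : Type*} [NormedAddCommGroup X] [NormedSpace ℂ X]
    (N : ℕ) (x : Fin N → X) : ℝ :=
  (∫ z : ℕ → Circle, ‖∑ n : Fin N, mon ((n : ℕ) + 1) z • x n‖ ^ p ∂muTN) ^ (1 / p)

/-! If no uniform constant existed, we could pick for every `k` a polynomial `yᵏ` of length `Nₖ`
violating the inequality with constant `k + 1`, and a prime `qₖ = p_{iₖ} > Nₖ`, distinct for
distinct `k`. Writing `yᵏ` onto the indices `(n + 1) qₖ` glues all of them into one sequence `x`.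
Since `z^{α((n+1) qₖ)} = z_{iₖ} z^{α(n+1)}` and `|z_{iₖ}| = 1`, choosing the coefficients `a` as
the indicator of the `k`-th block reproduces both sides of the inequality for `yᵏ`, so the
constant `C` that the hypothesis provides for `x` is at least `k + 1` for every `k`. -/

open Function

theorem mon_eq_prod_range_of_le {n K : ℕ} (hnK : n ≤ K) (z : ℕ → Circle) :
    mon n z = ∏ i ∈ Finset.range K, (z i : ℂ) ^ n.factorization (Nat.nth Nat.Prime i) := by
  refine Finset.prod_subset (Finset.range_subset_range.2 hnK) fun i _ hi => ?_
  have : n < Nat.nth Nat.Prime i := by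
    have := Nat.add_two_le_nth_prime i
    simp only [Finset.mem_range, not_lt] at hi
    omega
  rw [Nat.factorization_eq_zero_of_lt this, pow_zero]

theorem mon_mul {m n : ℕ} (hm : m ≠ 0) (hn : n ≠ 0) (z : ℕ → Circle) :
    mon (m * n) z = mon m z * mon n z := by
  rw [mon_eq_prod_range_of_le (Nat.le_mul_of_pos_right m (Nat.pos_of_ne_zero hn)),
    mon_eq_prod_range_of_le (Nat.le_mul_of_pos_left n (Nat.pos_of_ne_zero hm)), mon,
    ← Finset.prod_mul_distrib]
  simp only [Nat.factorization_mul hm hn, Finsupp.add_apply, pow_add]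

theorem mon_nth_prime (i : ℕ) (z : ℕ → Circle) : mon (Nat.nth Nat.Prime i) z = z i := by
  have hmem : i ∈ Finset.range (Nat.nth Nat.Prime i) := by
    have := Nat.add_two_le_nth_prime i
    simp only [Finset.mem_range]; omega
  rw [mon, Finset.prod_eq_single_of_mem i hmem, (Nat.prime_nth_prime i).factorization_self,
    pow_one]
  intro j _ hji
  rw [Nat.factorization_eq_zero_of_not_dvd, pow_zero]
  rw [(Nat.prime_dvd_prime_iff_eq (Nat.prime_nth_prime j) (Nat.prime_nth_prime i))]
  exact fun h => hji ((Nat.nth_injective Nat.infinite_setOfPred_prime) h)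

theorem Nat.Prime.eq_of_mul_eq_mul {a b q r : ℕ} (hq : q.Prime) (hr : r.Prime) (ha : 0 < a)
    (hb : 0 < b) (haq : a < q) (hbr : b < r) (h : a * q = b * r) : q = r := by
  by_contra hne
  have hra : r ∣ a :=
    ((Nat.coprime_primes hr hq).2 (Ne.symm hne)).dvd_of_dvd_mul_right (h ▸ dvd_mul_left r b)
  have hqb : q ∣ b :=
    ((Nat.coprime_primes hq hr).2 hne).dvd_of_dvd_mul_right (h ▸ dvd_mul_left q a)
  have := Nat.le_of_dvd ha hra
  have := Nat.le_of_dvd hb hqb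
  omega

theorem exists_seq_mul_nth_prime {X : Type*} [Nonempty X] {N : ℕ → ℕ}
    (y : ∀ k, Fin (N k) → X) :
    ∃ (x : ℕ → X) (I : ℕ → ℕ), ∀ k (n : Fin (N k)),
      x (((n : ℕ) + 1) * Nat.nth Nat.Prime (I k)) = y k n := by
  set q : ℕ → ℕ := fun k => Nat.nth Nat.Prime (Nat.pair (N k) k)
  have hq : ∀ k, (q k).Prime := fun k => Nat.prime_nth_prime _
  have hNq : ∀ k, N k < q k := fun k => by
    show N k < Nat.nth Nat.Prime (Nat.pair (N k) k)
    have := Nat.left_le_pair (N k) k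
    have := Nat.add_two_le_nth_prime (Nat.pair (N k) k)
    omega
  have hq_inj : Injective q := fun k k' h =>
    (Nat.pair_eq_pair.1 (Nat.nth_injective Nat.infinite_setOfPred_prime h)).2
  let f : (Σ k, Fin (N k)) → ℕ := fun s => ((s.2 : ℕ) + 1) * q s.1
  have hf : Injective f := by
    rintro ⟨k, n⟩ ⟨k', n'⟩ h
    obtain rfl : k = k' := hq_inj <| (hq k).eq_of_mul_eq_mul (hq k') n.succ_pos n'.succ_pos
      ((hNq k).trans_le' n.isLt) ((hNq k').trans_le' n'.isLt) h
    obtain rfl : n = n' := Fin.ext (by simpa using Nat.eq_of_mul_eq_mul_right (hq k).pos h)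
    rfl
  exact ⟨extend f (fun s => y s.1 s.2) fun _ => Classical.arbitrary X,
    fun k => Nat.pair (N k) k, fun k n => hf.extend_apply _ _ ⟨k, n⟩⟩

theorem sum_bool_comp_of_injective {α β M : Type*} [Fintype α] [DecidableEq α] [Fintype β]
    [DecidableEq β] [AddCommMonoid M] {g : α → β} (hg : Injective g) (G : (α → Bool) → M) :
    ∑ ε : β → Bool, G (ε ∘ g) =
      2 ^ (Fintype.card β - Fintype.card α) • ∑ δ : α → Bool, G δ := by
  classical
  let e : α ≃ Set.range g := Equiv.ofInjective g hg
  rw [← (Equiv.piEquivPiSubtypeProd (· ∈ Set.range g) fun _ => Bool).symm.sum_comp,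
    Fintype.sum_prod_type]
  have hrestrict : ∀ u v, (Equiv.piEquivPiSubtypeProd (· ∈ Set.range g) fun _ => Bool).symm
      (u, v) ∘ g = u ∘ e := by
    intro u v; funext a
    simp [Equiv.piEquivPiSubtypeProd, e]
  simp only [hrestrict, Finset.sum_const, Finset.card_univ, Fintype.card_fun, Fintype.card_bool]
  rw [← Finset.smul_sum, Fintype.card_subtype_compl, Set.card_range_of_injective hg]
  congr 1
  exact (e.arrowCongr (Equiv.refl Bool)).symm.sum_comp G

theorem Eavg_comp_of_injective {N M : ℕ} {g : Fin N → Fin M} (hg : Injective g)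
    (F : (Fin N → Bool) → ℝ) : Eavg M (fun ε => F (ε ∘ g)) = Eavg N F := by
  have hNM : N ≤ M := by simpa using Fintype.card_le_of_injective g hg
  rw [Eavg, Eavg, sum_bool_comp_of_injective hg, Fintype.card_fin, Fintype.card_fin,
    nsmul_eq_mul, ← mul_assoc, ← Nat.sub_add_cancel hNM, pow_add, Nat.add_sub_cancel]
  push_cast
  field_simp

theorem injective_of_val_add_one_eq_mul {N M q : ℕ} (hq : 0 < q) {g : Fin N → Fin M}
    (hg : ∀ n, (g n : ℕ) + 1 = ((n : ℕ) + 1) * q) : Injective g := fun n n' h => by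
  have := congrArg (fun m : Fin M => (m : ℕ) + 1) h
  simp only [hg] at this
  exact Fin.ext (by simpa using Nat.eq_of_mul_eq_mul_right hq this)

theorem Hnorm_comp_of_mul_nth_prime (p : ℝ) {X : Type*} [NormedAddCommGroup X]
    [NormedSpace ℂ X] {N M i : ℕ} {g : Fin N → Fin M}
    (hg : ∀ n, (g n : ℕ) + 1 = ((n : ℕ) + 1) * Nat.nth Nat.Prime i)
    (b : Fin M → X) (hb : ∀ m ∉ Set.range g, b m = 0) :
    Hnorm p M b = Hnorm p N (b ∘ g) := by
  have hsum : ∀ z : ℕ → Circle, ∑ m : Fin M, mon ((m : ℕ) + 1) z • b m =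
      (z i : ℂ) • ∑ n : Fin N, mon ((n : ℕ) + 1) z • b (g n) := by
    intro z
    rw [Finset.smul_sum, eq_comm]
    refine Fintype.sum_of_injective g
      (injective_of_val_add_one_eq_mul (Nat.prime_nth_prime i).pos hg) _ _
      (fun m hm => by rw [hb m hm, smul_zero]) fun n => ?_
    rw [hg, mon_mul (n : ℕ).succ_ne_zero (Nat.prime_nth_prime i).ne_zero, mon_nth_prime,
      smul_smul, mul_comm]
  simp only [Hnorm, hsum, norm_smul, Circle.norm_coe, one_mul, comp_apply]

theorem Eavg_le_of_mul_nth_prime (p : ℝ) {X : Type*} [NormedAddCommGroup X] [NormedSpace ℂ X]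
    {x : ℕ → X} {C : ℝ}
    (hC : ∀ (N : ℕ) (a : Fin N → ℂ),
      Eavg N (fun ε => Hnorm p N (fun n => sgn ε n • (a n • x ((n : ℕ) + 1)))) ≤
        C * Hnorm p N (fun n => a n • x ((n : ℕ) + 1)))
    {N i : ℕ} (y : Fin N → X)
    (hy : ∀ n : Fin N, x (((n : ℕ) + 1) * Nat.nth Nat.Prime i) = y n) :
    Eavg N (fun ε => Hnorm p N (fun n => sgn ε n • y n)) ≤ C * Hnorm p N y := by
  classical
  set q := Nat.nth Nat.Prime i
  have hq : 0 < q := (Nat.prime_nth_prime i).pos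
  have hqn : ∀ n : Fin N, 0 < ((n : ℕ) + 1) * q := fun n => by positivity
  let g : Fin N → Fin (N * q) := fun n =>
    ⟨((n : ℕ) + 1) * q - 1, Nat.sub_one_lt_of_le (hqn n) (Nat.mul_le_mul_right q n.isLt)⟩
  have hg : ∀ n, (g n : ℕ) + 1 = ((n : ℕ) + 1) * q := fun n => Nat.sub_one_add_one (hqn n).ne'
  let a : Fin (N * q) → ℂ := fun m => if m ∈ Set.range g then 1 else 0
  have hrestrict : ∀ c : Fin (N * q) → ℂ,
      Hnorm p (N * q) (fun m => c m • (a m • x ((m : ℕ) + 1))) =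
        Hnorm p N (fun n => c (g n) • y n) := by
    intro c
    rw [Hnorm_comp_of_mul_nth_prime p hg _ fun m hm => by
      simp only [a, if_neg hm, zero_smul, smul_zero]]
    congr 1; funext n
    simp [a, hg, hy]
  have hones := hrestrict fun _ => 1
  simp only [one_smul] at hones
  calc Eavg N (fun ε => Hnorm p N (fun n => sgn ε n • y n))
      = Eavg (N * q) (fun ε => Hnorm p N (fun n => sgn (ε ∘ g) n • y n)) :=
        (Eavg_comp_of_injective (injective_of_val_add_one_eq_mul hq hg) _).symm
    _ = Eavg (N * q)
          (fun ε => Hnorm p (N * q) (fun m => sgn ε m • (a m • x ((m : ℕ) + 1)))) := by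
        simp only [hrestrict]; rfl
    _ ≤ C * Hnorm p (N * q) (fun m => a m • x ((m : ℕ) + 1)) := hC _ a
    _ = C * Hnorm p N y := by rw [hones]

theorem Hnorm_nonneg (p : ℝ) {X : Type*} [NormedAddCommGroup X] [NormedSpace ℂ X]
    (N : ℕ) (x : Fin N → X) : 0 ≤ Hnorm p N x :=
  Real.rpow_nonneg (integral_nonneg fun _ => by positivity) _

theorem stmt1_general {X : Type*} [NormedAddCommGroup X] [NormedSpace ℂ X]
    (p : ℝ)
    (h : ∀ x : ℕ → X, ∃ C : ℝ, 1 ≤ C ∧ ∀ (N : ℕ) (a : Fin N → ℂ),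
      Eavg N (fun ε => Hnorm p N (fun n => sgn ε n • (a n • x ((n : ℕ) + 1)))) ≤
        C * Hnorm p N (fun n => a n • x ((n : ℕ) + 1))) :
    ∃ C : ℝ, 1 ≤ C ∧ ∀ (N : ℕ) (x : Fin N → X),
      Eavg N (fun ε => Hnorm p N (fun n => sgn ε n • x n)) ≤ C * Hnorm p N x := by
  by_contra! hunif
  choose N y hy using fun k : ℕ => hunif (k + 1) (by simp)
  obtain ⟨x, I, hx⟩ := exists_seq_mul_nth_prime y
  obtain ⟨C, -, hC⟩ := h x
  obtain ⟨k, hk⟩ := exists_nat_ge C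
  have hblock := Eavg_le_of_mul_nth_prime p hC (y k) (hx k)
  have := mul_le_mul_of_nonneg_right (hk.trans (le_add_of_nonneg_right zero_le_one))
    (Hnorm_nonneg p (N k) (y k))
  linarith [hy k]

/-- If for every sequence `(x_n) ⊆ X` the system `(x_n n^{-s})` is RUC in `H_p(X)` (with a
constant possibly depending on the sequence), then a single uniform constant works. -/
theorem stmt1 {X : Type*} [NormedAddCommGroup X] [NormedSpace ℂ X] [CompleteSpace X]
    (p : ℝ) (hp : 2 ≤ p)
    (h : ∀ x : ℕ → X, ∃ C : ℝ, 1 ≤ C ∧ ∀ (N : ℕ) (a : Fin N → ℂ),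
      Eavg N (fun ε => Hnorm p N (fun n => sgn ε n • (a n • x ((n : ℕ) + 1)))) ≤
        C * Hnorm p N (fun n => a n • x ((n : ℕ) + 1))) :
    ∃ C : ℝ, 1 ≤ C ∧ ∀ (N : ℕ) (x : Fin N → X),
      Eavg N (fun ε => Hnorm p N (fun n => sgn ε n • x n)) ≤ C * Hnorm p N x :=
  stmt1_general p h
end
end

section
/- For every 1 ≤ p < ∞ there is a constant C_p ≥ 1, depending only on p, such that for every complex Banach space X, every N and all x_1,…,x_N ∈ X one has (1/C_p) · E_ε ‖∑_{n=1}^N ε_n x_n n^{-s}‖_{H_p(X)} ≤ E_ε ‖∑_{n=1}^N ε_n x_n‖_X ≤ C_p · E_ε ‖∑_{n=1}^N ε_n x_n n^{-s}‖_{H_p(X)}. -/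
open MeasureTheory TopologicalSpace

noncomputable section

universe u

/-! For each `z ∈ 𝕋^ℕ` the coefficients `z^{α(n)} x_n` differ from `x_n` by unimodular
scalars, so by the contraction principle `E_ε ‖∑ ε_n z^{α(n)} x_n‖` and `E_ε ‖∑ ε_n x_n‖` agree
up to a factor `2` (real and imaginary parts are treated separately). Integrating over `z` and
using Jensen's inequality bounds the Rademacher average by the `H_1` norm, hence by the `H_p` norm.
The other direction needs the `p`-th moment of a Rademacher sum `S` to be controlled by its first
moment, which is Kahane's inequality. It follows from Lévy's reflection argument and the
Hoffmann-Jørgensen inequality `P(‖S‖ > 2t + max ‖x_n‖) ≤ 4 P(‖S‖ > t)²`, iterated along levels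
`t_j ≈ 9 ⋅ 2^j E ‖S‖` at which the tails decay like `2^{-2^j}`. -/

namespace Rademacher

open Finset

variable {N : ℕ}

lemma Eavg_mono {F G : (Fin N → Bool) → ℝ} (h : ∀ ε, F ε ≤ G ε) : Eavg N F ≤ Eavg N G := by
  unfold Eavg
  gcongr with ε
  exact h ε

lemma Eavg_nonneg {F : (Fin N → Bool) → ℝ} (h : ∀ ε, 0 ≤ F ε) : 0 ≤ Eavg N F := by
  unfold Eavg
  exact mul_nonneg (by positivity) (sum_nonneg fun ε _ => h ε)

lemma Eavg_const (c : ℝ) : Eavg N (fun _ => c) = c := by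
  simp [Eavg]

lemma Eavg_add (F G : (Fin N → Bool) → ℝ) :
    Eavg N (fun ε => F ε + G ε) = Eavg N F + Eavg N G := by
  simp only [Eavg, sum_add_distrib, mul_add]

lemma Eavg_const_mul (c : ℝ) (F : (Fin N → Bool) → ℝ) :
    Eavg N (fun ε => c * F ε) = c * Eavg N F := by
  simp only [Eavg, ← mul_sum]
  ring

lemma Eavg_sum {ι : Type*} (s : Finset ι) (F : ι → (Fin N → Bool) → ℝ) :
    Eavg N (fun ε => ∑ i ∈ s, F i ε) = ∑ i ∈ s, Eavg N (F i) := by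
  simp only [Eavg, mul_sum]
  exact sum_comm

lemma Eavg_comp_involutive {σ : (Fin N → Bool) → (Fin N → Bool)} (hσ : Function.Involutive σ)
    (F : (Fin N → Bool) → ℝ) : Eavg N (fun ε => F (σ ε)) = Eavg N F := by
  unfold Eavg
  rw [hσ.bijective.sum_comp F]

lemma Eavg_ite_mem (s : Finset (Fin N → Bool)) (c : ℝ) :
    Eavg N (fun ε => if ε ∈ s then c else 0) = #s / 2 ^ N * c := by
  simp only [Eavg, ← sum_filter, sum_const, nsmul_eq_mul, filter_mem_eq_inter, univ_inter]
  ring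

lemma norm_add_smul_le {E : Type*} [SeminormedAddCommGroup E] [NormedSpace ℝ E] {u w : E}
    {s : ℝ} (hs : |s| ≤ 1) :
    ‖u + s • w‖ ≤ (1 + s) / 2 * ‖u + w‖ + (1 - s) / 2 * ‖u - w‖ := by
  obtain ⟨hs₁, hs₂⟩ := abs_le.mp hs
  have h : u + s • w = ((1 + s) / 2) • (u + w) + ((1 - s) / 2) • (u - w) := by module
  calc ‖u + s • w‖ ≤ ‖((1 + s) / 2) • (u + w)‖ + ‖((1 - s) / 2) • (u - w)‖ :=
        h ▸ norm_add_le _ _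
    _ = _ := by
        rw [norm_smul, norm_smul, Real.norm_of_nonneg (by linarith),
          Real.norm_of_nonneg (by linarith)]

lemma norm_sgn (ε : Fin N → Bool) (n : Fin N) : ‖sgn ε n‖ = 1 := by
  unfold sgn; split <;> simp

def flipOn (P : Fin N → Prop) [DecidablePred P] (ε : Fin N → Bool) : Fin N → Bool :=
  fun n => if P n then !ε n else ε n

section Flip

variable (P : Fin N → Prop) [DecidablePred P]

lemma flipOn_involutive : Function.Involutive (flipOn P) := by
  intro ε; funext n; unfold flipOn; split <;> simp

lemma sgn_flipOn_of_pos (ε : Fin N → Bool) {n : Fin N} (h : P n) :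
    sgn (flipOn P ε) n = -sgn ε n := by
  unfold sgn flipOn; cases ε n <;> simp [h]

lemma sgn_flipOn_of_neg (ε : Fin N → Bool) {n : Fin N} (h : ¬P n) :
    sgn (flipOn P ε) n = sgn ε n := by
  simp [sgn, flipOn, h]

end Flip

variable {X : Type*} [NormedAddCommGroup X] [NormedSpace ℂ X]

def signedSum (y : Fin N → X) (ε : Fin N → Bool) : X := ∑ n, sgn ε n • y n

def signedSumOn (P : Fin N → Prop) [DecidablePred P] (y : Fin N → X) (ε : Fin N → Bool) : X :=
  ∑ n ∈ univ.filter P, sgn ε n • y n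

section SignedSum

variable (P : Fin N → Prop) [DecidablePred P] (y : Fin N → X)

lemma signedSumOn_add_signedSumOn_not (ε : Fin N → Bool) :
    signedSumOn P y ε + signedSumOn (¬P ·) y ε = signedSum y ε :=
  sum_filter_add_sum_filter_not _ _ _

lemma signedSumOn_congr {ε ε' : Fin N → Bool} (h : ∀ n, P n → ε n = ε' n) :
    signedSumOn P y ε = signedSumOn P y ε' :=
  sum_congr rfl fun n hn => by rw [sgn, sgn, h n (mem_filter.mp hn).2]

lemma signedSumOn_flipOn_of_imp {Q : Fin N → Prop} [DecidablePred Q] (hQ : ∀ n, Q n → P n)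
    (ε : Fin N → Bool) : signedSumOn Q y (flipOn P ε) = -signedSumOn Q y ε := by
  simp only [signedSumOn, ← sum_neg_distrib, ← neg_smul]
  exact sum_congr rfl fun n hn => by rw [sgn_flipOn_of_pos P ε (hQ n (mem_filter.mp hn).2)]

lemma signedSumOn_flipOn_of_imp_not {Q : Fin N → Prop} [DecidablePred Q]
    (hQ : ∀ n, Q n → ¬P n) (ε : Fin N → Bool) :
    signedSumOn Q y (flipOn P ε) = signedSumOn Q y ε :=
  sum_congr rfl fun n hn => by rw [sgn_flipOn_of_neg P ε (hQ n (mem_filter.mp hn).2)]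

lemma signedSum_flipOn (ε : Fin N → Bool) :
    signedSum y (flipOn P ε) = signedSumOn (¬P ·) y ε - signedSumOn P y ε := by
  rw [← signedSumOn_add_signedSumOn_not P, signedSumOn_flipOn_of_imp P y (fun _ h => h),
    signedSumOn_flipOn_of_imp_not P y (fun _ h => h)]
  abel

lemma two_mul_norm_signedSumOn_le (ε : Fin N → Bool) :
    2 * ‖signedSumOn P y ε‖ ≤ ‖signedSum y ε‖ + ‖signedSum y (flipOn P ε)‖ := by
  have h : (2 : ℝ) • signedSumOn P y ε = signedSum y ε - signedSum y (flipOn P ε) := by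
    rw [signedSum_flipOn, ← signedSumOn_add_signedSumOn_not P]; module
  rw [← Real.norm_two, ← norm_smul, h]
  exact norm_sub_le _ _

lemma two_mul_norm_signedSumOn_not_le (ε : Fin N → Bool) :
    2 * ‖signedSumOn (¬P ·) y ε‖ ≤ ‖signedSum y ε‖ + ‖signedSum y (flipOn P ε)‖ := by
  have h : (2 : ℝ) • signedSumOn (¬P ·) y ε = signedSum y ε + signedSum y (flipOn P ε) := by
    rw [signedSum_flipOn, ← signedSumOn_add_signedSumOn_not P]; module
  rw [← Real.norm_two, ← norm_smul, h]
  exact norm_add_le _ _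

end SignedSum

lemma signedSumOn_eq_single (y : Fin N → X) (k : Fin N) (ε : Fin N → Bool) :
    signedSumOn (· = k) y ε = sgn ε k • y k := by
  simp [signedSumOn, filter_eq']

lemma norm_signedSum_le (y : Fin N → X) (ε : Fin N → Bool) : ‖signedSum y ε‖ ≤ ∑ n, ‖y n‖ :=
  (norm_sum_le _ _).trans_eq (sum_congr rfl fun n _ => by rw [norm_smul, norm_sgn, one_mul])

section Contraction

lemma signedSum_update (y : Fin N → X) (k : Fin N) (v : X) (ε : Fin N → Bool) :
    signedSum (Function.update y k v) ε = signedSumOn (¬· = k) y ε + sgn ε k • v := by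
  rw [← signedSumOn_add_signedSumOn_not (· = k), signedSumOn_eq_single, Function.update_self,
    add_comm]
  congr 1
  exact sum_congr rfl fun n hn => by rw [Function.update_of_ne (mem_filter.mp hn).2]

/-- `u + s w` is a convex combination of `u + w` and `u - w`, which are exchanged by flipping the
`k`-th sign. -/
lemma Eavg_norm_signedSum_update_smul_le (y : Fin N → X) (k : Fin N) {s : ℝ} (hs : |s| ≤ 1) :
    Eavg N (fun ε => ‖signedSum (Function.update y k ((s : ℂ) • y k)) ε‖) ≤
      Eavg N (fun ε => ‖signedSum y ε‖) := by
  set u := signedSumOn (¬· = k) y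
  set w := fun ε => sgn ε k • y k
  have h_upd : ∀ ε, signedSum (Function.update y k ((s : ℂ) • y k)) ε = u ε + s • w ε :=
    fun ε => by rw [signedSum_update, smul_comm, Complex.coe_smul]
  have h_self : ∀ ε, signedSum y ε = u ε + w ε := fun ε => by
    rw [← signedSum_update, Function.update_eq_self]
  have h_flip : ∀ ε, signedSum y (flipOn (· = k) ε) = u ε - w ε := fun ε => by
    rw [signedSum_flipOn, signedSumOn_eq_single]
  calc Eavg N (fun ε => ‖signedSum (Function.update y k ((s : ℂ) • y k)) ε‖)
      ≤ Eavg N (fun ε => (1 + s) / 2 * ‖signedSum y ε‖ +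
          (1 - s) / 2 * ‖signedSum y (flipOn (· = k) ε)‖) :=
        Eavg_mono fun ε => by rw [h_upd, h_self, h_flip]; exact norm_add_smul_le hs
    _ = Eavg N (fun ε => ‖signedSum y ε‖) := by
        rw [Eavg_add, Eavg_const_mul, Eavg_const_mul,
          Eavg_comp_involutive (flipOn_involutive _) (fun ε => ‖signedSum y ε‖)]
        ring

lemma Eavg_norm_signedSum_ofReal_smul_le (y : Fin N → X) {a : Fin N → ℝ}
    (ha : ∀ n, |a n| ≤ 1) :
    Eavg N (fun ε => ‖signedSum (fun n => (a n : ℂ) • y n) ε‖) ≤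
      Eavg N (fun ε => ‖signedSum y ε‖) := by
  classical
  suffices h : ∀ (T : Finset (Fin N)) (a : Fin N → ℝ), (∀ n, |a n| ≤ 1) → (∀ n ∉ T, a n = 1) →
      Eavg N (fun ε => ‖signedSum (fun n => (a n : ℂ) • y n) ε‖) ≤
        Eavg N (fun ε => ‖signedSum y ε‖) from h univ a ha (by simp)
  intro T
  induction T using Finset.induction_on with
  | empty =>
    intro a _ h1
    simp [h1]
  | insert k T hk ih =>
    intro a ha h1
    set a' := Function.update a k 1
    have h_eq : (fun n => (a n : ℂ) • y n) =
        Function.update (fun n => (a' n : ℂ) • y n) k ((a k : ℂ) • ((a' k : ℂ) • y k)) := by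
      funext n
      by_cases hn : n = k
      · subst hn; simp [a']
      · simp [a', Function.update_of_ne hn]
    rw [h_eq]
    refine (Eavg_norm_signedSum_update_smul_le _ k (ha k)).trans
      (ih a' (fun n => ?_) fun n hn => ?_)
    · by_cases hn : n = k
      · subst hn; simp [a']
      · simpa [a', Function.update_of_ne hn] using ha n
    · by_cases hnk : n = k
      · subst hnk; simp [a']
      · simpa [a', Function.update_of_ne hnk] using h1 n (by simp [hnk, hn])

lemma Eavg_norm_signedSum_smul_le (y : Fin N → X) {a : Fin N → ℂ} (ha : ∀ n, ‖a n‖ ≤ 1) :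
    Eavg N (fun ε => ‖signedSum (fun n => a n • y n) ε‖) ≤
      2 * Eavg N (fun ε => ‖signedSum y ε‖) := by
  have h_re := Eavg_norm_signedSum_ofReal_smul_le y
    (a := fun n => (a n).re) fun n => (Complex.abs_re_le_norm _).trans (ha n)
  have h_im := Eavg_norm_signedSum_ofReal_smul_le (fun n => Complex.I • y n)
    (a := fun n => (a n).im) fun n => (Complex.abs_im_le_norm _).trans (ha n)
  have h_I : ∀ ε, signedSum (fun n => Complex.I • y n) ε = Complex.I • signedSum y ε := fun ε => by
    simp only [signedSum, smul_sum, smul_comm (sgn ε _) Complex.I]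
  have h_split : ∀ ε, signedSum (fun n => a n • y n) ε =
      signedSum (fun n => ((a n).re : ℂ) • y n) ε +
        signedSum (fun n => ((a n).im : ℂ) • Complex.I • y n) ε := fun ε => by
    simp only [signedSum, ← sum_add_distrib, smul_smul, ← add_smul, ← mul_add,
      Complex.re_add_im]
  simp only [h_I, norm_smul, Complex.norm_I, one_mul] at h_im
  calc Eavg N (fun ε => ‖signedSum (fun n => a n • y n) ε‖)
      ≤ Eavg N (fun ε => ‖signedSum (fun n => ((a n).re : ℂ) • y n) ε‖ +
          ‖signedSum (fun n => ((a n).im : ℂ) • Complex.I • y n) ε‖) :=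
        Eavg_mono fun ε => h_split ε ▸ norm_add_le _ _
    _ ≤ 2 * Eavg N (fun ε => ‖signedSum y ε‖) := by
        rw [Eavg_add]; linarith

end Contraction

section Combinatorics

variable {α : Type*} [DecidableEq α]

lemma card_le_two_mul_card_inter_of_involutive {σ : α → α} (hσ : Function.Involutive σ)
    {U E : Finset α} (hU : ∀ ε ∈ U, σ ε ∈ U) (hE : ∀ ε ∈ U, ε ∈ E ∨ σ ε ∈ E) :
    #U ≤ 2 * #(U ∩ E) := by
  have h_sub : U ⊆ (U ∩ E) ∪ (U ∩ E).image σ := by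
    intro ε hε
    rcases hE ε hε with h | h
    · exact mem_union_left _ (mem_inter.mpr ⟨hε, h⟩)
    · exact mem_union_right _ (mem_image.mpr ⟨σ ε, mem_inter.mpr ⟨hU ε hε, h⟩, hσ ε⟩)
  calc #U ≤ #(U ∩ E) + #((U ∩ E).image σ) := (card_le_card h_sub).trans (card_union_le _ _)
    _ ≤ 2 * #(U ∩ E) := by linarith [card_image_le (s := U ∩ E) (f := σ)]

lemma card_inter_mul_card_univ {ι β : Type*} [Fintype ι] [Fintype β] [DecidableEq β]
    [DecidableEq ι] (P : ι → Prop) [DecidablePred P] {A C : Finset (ι → β)}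
    (hA : ∀ ε ε', (∀ n, P n → ε n = ε' n) → ε ∈ A → ε' ∈ A)
    (hC : ∀ ε ε', (∀ n, ¬P n → ε n = ε' n) → ε ∈ C → ε' ∈ C) :
    #(A ∩ C) * Fintype.card (ι → β) = #A * #C := by
  let merge : (ι → β) → (ι → β) → ι → β := fun a c n => if P n then a n else c n
  let φ : (ι → β) × (ι → β) → (ι → β) × (ι → β) := fun q => (merge q.1 q.2, merge q.2 q.1)
  have hφ : Function.Involutive φ := fun q => by
    ext n <;> by_cases hn : P n <;> simp [φ, merge, hn]
  rw [← card_univ, ← card_product, ← card_product]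
  refine card_nbij' φ φ (fun q hq => ?_) (fun q hq => ?_) (fun q _ => hφ q) (fun q _ => hφ q)
  · simp only [coe_product, Set.mem_prod, mem_coe, mem_inter, mem_univ, and_true] at hq ⊢
    exact ⟨hA q.1 _ (fun n hn => by simp [φ, merge, hn]) hq.1,
      hC q.1 _ (fun n hn => by simp [φ, merge, hn]) hq.2⟩
  · simp only [coe_product, Set.mem_prod, mem_coe, mem_inter, mem_univ, and_true] at hq ⊢
    exact ⟨hA q.1 _ (fun n hn => by simp [φ, merge, hn]) hq.1,
      hC q.2 _ (fun n hn => by simp [φ, merge, hn]) hq.2⟩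

end Combinatorics

section Tails

variable {X : Type*} [NormedAddCommGroup X] [NormedSpace ℂ X] (y : Fin N → X)

def partialSum (k : ℕ) (ε : Fin N → Bool) : X := signedSumOn (fun n : Fin N => (n : ℕ) < k) y ε

def remainderSum (k : ℕ) (ε : Fin N → Bool) : X :=
  signedSumOn (fun n : Fin N => ¬(n : ℕ) < k) y ε

def tailSet (t : ℝ) : Finset (Fin N → Bool) := univ.filter fun ε => t < ‖signedSum y ε‖

def firstPassage (t : ℝ) (k : ℕ) : Finset (Fin N → Bool) :=
  univ.filter fun ε => t < ‖partialSum y k ε‖ ∧ ∀ j < k, ‖partialSum y j ε‖ ≤ t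

def remainderTailSet (t : ℝ) (k : ℕ) : Finset (Fin N → Bool) :=
  univ.filter fun ε => t < ‖remainderSum y k ε‖

lemma partialSum_zero (ε : Fin N → Bool) : partialSum y 0 ε = 0 := by
  simp [partialSum, signedSumOn]

lemma partialSum_of_le {k : ℕ} (hk : N ≤ k) (ε : Fin N → Bool) :
    partialSum y k ε = signedSum y ε := by
  simp only [partialSum, signedSumOn, signedSum]
  rw [filter_true_of_mem fun n _ => n.isLt.trans_le hk]

lemma partialSum_succ {j : ℕ} (hj : j < N) (ε : Fin N → Bool) :
    partialSum y (j + 1) ε = partialSum y j ε + sgn ε ⟨j, hj⟩ • y ⟨j, hj⟩ := by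
  have h : univ.filter (fun n : Fin N => (n : ℕ) < j + 1) =
      insert ⟨j, hj⟩ (univ.filter fun n : Fin N => (n : ℕ) < j) := by
    ext n
    simp only [mem_filter, mem_univ, true_and, mem_insert, Fin.ext_iff]
    omega
  simp only [partialSum, signedSumOn, h]
  rw [sum_insert (by simp), add_comm]

lemma partialSum_add_remainderSum (k : ℕ) (ε : Fin N → Bool) :
    partialSum y k ε + remainderSum y k ε = signedSum y ε :=
  signedSumOn_add_signedSumOn_not _ y ε

/-- Flipping the first `k` signs preserves the event and `S ε - S (flip ε) = 2 S_k ε`. -/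
lemma card_firstPassage_le (t : ℝ) (k : ℕ) :
    #(firstPassage y t k) ≤ 2 * #(firstPassage y t k ∩ tailSet y t) := by
  have h_norm : ∀ j ≤ k, ∀ ε,
      ‖partialSum y j (flipOn (fun n : Fin N => (n : ℕ) < k) ε)‖ = ‖partialSum y j ε‖ :=
    fun j hj ε => by
      rw [partialSum, signedSumOn_flipOn_of_imp _ y (fun n hn => hn.trans_le hj), norm_neg,
        partialSum]
  refine card_le_two_mul_card_inter_of_involutive
    (flipOn_involutive fun n : Fin N => (n : ℕ) < k) (fun ε hε => ?_)
    fun ε hε => ?_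
  · simp only [firstPassage, mem_filter, mem_univ, true_and] at hε ⊢
    exact ⟨h_norm k le_rfl ε ▸ hε.1, fun j hj => h_norm j hj.le ε ▸ hε.2 j hj⟩
  · simp only [firstPassage, tailSet, mem_filter, mem_univ, true_and] at hε ⊢
    have h_two : 2 * ‖partialSum y k ε‖ ≤ _ := two_mul_norm_signedSumOn_le _ y ε
    by_contra! h
    linarith

lemma sum_card_firstPassage_le (t : ℝ) (K : ℕ) :
    ∑ k ∈ range K, #(firstPassage y t k) ≤ 2 * #(tailSet y t) := by
  have h_disj : (range K : Set ℕ).PairwiseDisjoint fun k => firstPassage y t k ∩ tailSet y t := by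
    intro k _ k' _ hkk'
    refine disjoint_left.mpr fun ε hε hε' => ?_
    simp only [firstPassage, mem_inter, mem_filter, mem_univ, true_and] at hε hε'
    rcases hkk'.lt_or_gt with h | h
    · exact (hε'.1.2 k h).not_gt hε.1.1
    · exact (hε.1.2 k' h).not_gt hε'.1.1
  calc ∑ k ∈ range K, #(firstPassage y t k)
      ≤ ∑ k ∈ range K, 2 * #(firstPassage y t k ∩ tailSet y t) :=
        sum_le_sum fun k _ => card_firstPassage_le y t k
    _ = 2 * #((range K).biUnion fun k => firstPassage y t k ∩ tailSet y t) := by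
        rw [card_biUnion h_disj, mul_sum]
    _ ≤ 2 * #(tailSet y t) :=
        Nat.mul_le_mul_left 2 (card_le_card (biUnion_subset.mpr fun _ _ => inter_subset_right))

/-- Flipping the first `k` signs preserves the event and `S ε + S (flip ε) = 2 (S ε - S_k ε)`. -/
lemma card_remainderTailSet_le (t : ℝ) (k : ℕ) :
    #(remainderTailSet y t k) ≤ 2 * #(tailSet y t) := by
  have h_inv : ∀ ε, remainderSum y k (flipOn (fun n : Fin N => (n : ℕ) < k) ε) =
      remainderSum y k ε :=
    signedSumOn_flipOn_of_imp_not _ y fun _ h => h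
  refine (card_le_two_mul_card_inter_of_involutive
    (flipOn_involutive fun n : Fin N => (n : ℕ) < k) (fun ε hε => ?_)
    fun ε hε => ?_).trans (Nat.mul_le_mul_left 2 (card_le_card inter_subset_right))
  · simpa [remainderTailSet, h_inv] using hε
  · simp only [remainderTailSet, tailSet, mem_filter, mem_univ, true_and] at hε ⊢
    have h_two : 2 * ‖remainderSum y k ε‖ ≤ _ := two_mul_norm_signedSumOn_not_le _ y ε
    by_contra! h
    linarith

/-- If the sum exceeds `2 t + M`, then at the first time `k` that the partial sums exceed `t`
they are still at most `t + M`, so the remainder after `k` exceeds `t`. -/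
lemma tailSet_subset_biUnion {t M : ℝ} (ht : 0 ≤ t) (hM₀ : 0 ≤ M) (hM : ∀ n, ‖y n‖ ≤ M) :
    tailSet y (2 * t + M) ⊆
      (range (N + 1)).biUnion fun k => firstPassage y t k ∩ remainderTailSet y t k := by
  classical
  intro ε hε
  simp only [tailSet, mem_filter, mem_univ, true_and] at hε
  have h_top : t < ‖partialSum y N ε‖ := by rw [partialSum_of_le y le_rfl]; linarith
  have hex : ∃ k, t < ‖partialSum y k ε‖ := ⟨N, h_top⟩
  obtain ⟨k, hk, hmin⟩ : ∃ k, t < ‖partialSum y k ε‖ ∧ ∀ i < k, ¬t < ‖partialSum y i ε‖ :=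
    ⟨Nat.find hex, Nat.find_spec hex, fun _ => Nat.find_min hex⟩
  have hkN : k ≤ N := not_lt.mp fun h => hmin N h h_top
  obtain ⟨j, rfl⟩ : ∃ j, k = j + 1 := Nat.exists_eq_succ_of_ne_zero fun h => by
    rw [h, partialSum_zero, norm_zero] at hk; linarith
  have h_first : ‖partialSum y (j + 1) ε‖ ≤ t + M := by
    rw [partialSum_succ y (by omega)]
    refine (norm_add_le _ _).trans (add_le_add (not_lt.mp (hmin j (by omega))) ?_)
    rw [norm_smul, norm_sgn, one_mul]
    exact hM _
  have h_split := partialSum_add_remainderSum y (j + 1) ε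
  have : ‖signedSum y ε‖ ≤ ‖partialSum y (j + 1) ε‖ + ‖remainderSum y (j + 1) ε‖ :=
    h_split ▸ norm_add_le _ _
  simp only [mem_biUnion, mem_range, mem_inter, firstPassage, remainderTailSet, mem_filter,
    mem_univ, true_and]
  exact ⟨j + 1, by omega, ⟨hk, fun i hi => not_lt.mp (hmin i hi)⟩, by linarith⟩

lemma card_tailSet_mul_two_pow_le {t M : ℝ} (ht : 0 ≤ t) (hM₀ : 0 ≤ M) (hM : ∀ n, ‖y n‖ ≤ M) :
    #(tailSet y (2 * t + M)) * 2 ^ N ≤ 4 * #(tailSet y t) ^ 2 := by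
  have h_indep : ∀ k, #(firstPassage y t k ∩ remainderTailSet y t k) * 2 ^ N =
      #(firstPassage y t k) * #(remainderTailSet y t k) := fun k => by
    have h_partial : ∀ ε ε' : Fin N → Bool, (∀ n : Fin N, (n : ℕ) < k → ε n = ε' n) →
        ∀ j ≤ k, partialSum y j ε = partialSum y j ε' := fun ε ε' h j hj =>
      signedSumOn_congr _ y fun n hn => h n (lt_of_lt_of_le hn hj)
    have hA : ∀ ε ε' : Fin N → Bool, (∀ n : Fin N, (n : ℕ) < k → ε n = ε' n) →
        ε ∈ firstPassage y t k → ε' ∈ firstPassage y t k := fun ε ε' h hε => by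
      simp only [firstPassage, mem_filter, mem_univ, true_and] at hε ⊢
      rw [← h_partial ε ε' h k le_rfl]
      exact ⟨hε.1, fun j hj => h_partial ε ε' h j hj.le ▸ hε.2 j hj⟩
    have hC : ∀ ε ε' : Fin N → Bool, (∀ n : Fin N, ¬(n : ℕ) < k → ε n = ε' n) →
        ε ∈ remainderTailSet y t k → ε' ∈ remainderTailSet y t k := fun ε ε' h hε => by
      simp only [remainderTailSet, mem_filter, mem_univ, true_and] at hε ⊢
      rwa [remainderSum, ← signedSumOn_congr _ y h]
    simpa using card_inter_mul_card_univ _ hA hC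
  calc #(tailSet y (2 * t + M)) * 2 ^ N
      ≤ (∑ k ∈ range (N + 1), #(firstPassage y t k ∩ remainderTailSet y t k)) * 2 ^ N :=
        Nat.mul_le_mul_right _ ((card_le_card (tailSet_subset_biUnion y ht hM₀ hM)).trans
          card_biUnion_le)
    _ = ∑ k ∈ range (N + 1), #(firstPassage y t k) * #(remainderTailSet y t k) := by
        rw [sum_mul]; exact sum_congr rfl fun k _ => h_indep k
    _ ≤ ∑ k ∈ range (N + 1), #(firstPassage y t k) * (2 * #(tailSet y t)) :=
        sum_le_sum fun k _ => Nat.mul_le_mul_left _ (card_remainderTailSet_le y t k)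
    _ ≤ 2 * #(tailSet y t) * (2 * #(tailSet y t)) := by
        rw [← sum_mul]; exact Nat.mul_le_mul_right _ (sum_card_firstPassage_le y t _)
    _ = 4 * #(tailSet y t) ^ 2 := by ring

lemma norm_le_Eavg_norm_signedSum (n : Fin N) :
    ‖y n‖ ≤ Eavg N (fun ε => ‖signedSum y ε‖) := by
  calc ‖y n‖ = Eavg N (fun ε => ‖signedSumOn (· = n) y ε‖) := by
        simp [signedSumOn_eq_single, norm_smul, norm_sgn, Eavg_const]
    _ ≤ Eavg N (fun ε => (‖signedSum y ε‖ + ‖signedSum y (flipOn (· = n) ε)‖) / 2) :=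
        Eavg_mono fun ε => by linarith [two_mul_norm_signedSumOn_le (· = n) y ε]
    _ = Eavg N (fun ε => ‖signedSum y ε‖) := by
        simp only [div_eq_inv_mul, Eavg_const_mul, Eavg_add,
          Eavg_comp_involutive (flipOn_involutive (· = n)) (fun ε => ‖signedSum y ε‖)]
        ring

lemma card_tailSet_div_mul_le (t : ℝ) :
    #(tailSet y t) / 2 ^ N * t ≤ Eavg N (fun ε => ‖signedSum y ε‖) := by
  rw [← Eavg_ite_mem]
  refine Eavg_mono fun ε => ?_
  split_ifs with h
  · exact (mem_filter.mp h).2.le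
  · exact norm_nonneg _

lemma rpow_le_add_sum_ite {p s : ℝ} (hp : 0 ≤ p) (hs : 0 ≤ s) {t : ℕ → ℝ} (ht : ∀ j, 0 ≤ t j)
    {K : ℕ} (hK : s ≤ t K) :
    s ^ p ≤ t 0 ^ p + ∑ j ∈ range K, if t j < s then t (j + 1) ^ p else 0 := by
  have h_nonneg : ∀ K, 0 ≤ ∑ j ∈ range K, if t j < s then t (j + 1) ^ p else 0 :=
    fun K => sum_nonneg fun j _ => by split_ifs <;> positivity [ht (j + 1)]
  induction K with
  | zero => simpa using Real.rpow_le_rpow hs hK hp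
  | succ K ih =>
    rw [sum_range_succ]
    by_cases hsK : s ≤ t K
    · have := ih hsK
      split_ifs <;> linarith [Real.rpow_nonneg (ht (K + 1)) p]
    · rw [if_pos (not_le.mp hsK)]
      linarith [Real.rpow_le_rpow hs hK hp, Real.rpow_nonneg (ht 0) p, h_nonneg K]

lemma Eavg_rpow_le_add_sum {p : ℝ} (hp : 0 ≤ p) {t : ℕ → ℝ} (ht : ∀ j, 0 ≤ t j) {K : ℕ}
    (hK : ∀ ε, ‖signedSum y ε‖ ≤ t K) :
    Eavg N (fun ε => ‖signedSum y ε‖ ^ p) ≤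
      t 0 ^ p + ∑ j ∈ range K, #(tailSet y (t j)) / 2 ^ N * t (j + 1) ^ p := by
  calc Eavg N (fun ε => ‖signedSum y ε‖ ^ p)
      ≤ Eavg N (fun ε => t 0 ^ p + ∑ j ∈ range K,
          if ε ∈ tailSet y (t j) then t (j + 1) ^ p else 0) :=
        Eavg_mono fun ε => by
          simpa [tailSet] using rpow_le_add_sum_ite hp (norm_nonneg _) ht (hK ε)
    _ = _ := by simp only [Eavg_add, Eavg_const, Eavg_sum, Eavg_ite_mem]

/-- The thresholds of the iteration, chosen so that `2 * kahaneLevel M j + M` is the next one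
and the first one, `8 * M`, is exceeded with probability at most `1 / 8` by Markov. -/
def kahaneLevel (M : ℝ) (j : ℕ) : ℝ := (9 * 2 ^ j - 1) * M

lemma kahaneLevel_nonneg {M : ℝ} (hM : 0 ≤ M) (j : ℕ) : 0 ≤ kahaneLevel M j :=
  mul_nonneg (by linarith [one_le_pow₀ (M₀ := ℝ) (a := 2) (n := j) one_le_two]) hM

lemma four_mul_card_tailSet_kahaneLevel_le {M : ℝ} (hM : 0 < M)
    (hS : Eavg N (fun ε => ‖signedSum y ε‖) ≤ M) (hy : ∀ n, ‖y n‖ ≤ M) (j : ℕ) :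
    4 * #(tailSet y (kahaneLevel M j)) * 2 ^ 2 ^ j ≤ 2 ^ N := by
  induction j with
  | zero =>
    have h := (card_tailSet_div_mul_le y (8 * M)).trans hS
    have h8 : (#(tailSet y (8 * M)) : ℝ) * 8 ≤ 2 ^ N := by
      rw [div_mul_eq_mul_div, div_le_iff₀ (by positivity)] at h
      nlinarith
    have : kahaneLevel M 0 = 8 * M := by rw [kahaneLevel]; norm_num
    rw [this]
    exact_mod_cast (by norm_num; linarith : (4 * #(tailSet y (8 * M)) * 2 ^ 2 ^ 0 : ℝ) ≤ 2 ^ N)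
  | succ j ih =>
    have h_sq := card_tailSet_mul_two_pow_le y (kahaneLevel_nonneg hM.le j) hM.le hy
    rw [show 2 * kahaneLevel M j + M = kahaneLevel M (j + 1) by simp [kahaneLevel]; ring]
      at h_sq
    refine Nat.le_of_mul_le_mul_right ?_ (Nat.two_pow_pos N)
    calc 4 * #(tailSet y (kahaneLevel M (j + 1))) * 2 ^ 2 ^ (j + 1) * 2 ^ N
        = 4 * 2 ^ 2 ^ (j + 1) * (#(tailSet y (kahaneLevel M (j + 1))) * 2 ^ N) := by ring
      _ ≤ 4 * 2 ^ 2 ^ (j + 1) * (4 * #(tailSet y (kahaneLevel M j)) ^ 2) :=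
        Nat.mul_le_mul_left _ h_sq
      _ = (4 * #(tailSet y (kahaneLevel M j)) * 2 ^ 2 ^ j) ^ 2 := by ring
      _ ≤ (2 ^ N) ^ 2 := Nat.pow_le_pow_left ih 2
      _ = 2 ^ N * 2 ^ N := sq _

lemma card_tailSet_kahaneLevel_div_le {M : ℝ} (hM : 0 < M)
    (hS : Eavg N (fun ε => ‖signedSum y ε‖) ≤ M) (hy : ∀ n, ‖y n‖ ≤ M) (j : ℕ) :
    #(tailSet y (kahaneLevel M j)) / 2 ^ N ≤ ((2 : ℝ) ^ 2 ^ j)⁻¹ := by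
  have h : (4 * #(tailSet y (kahaneLevel M j)) * 2 ^ 2 ^ j : ℝ) ≤ 2 ^ N := by
    exact_mod_cast four_mul_card_tailSet_kahaneLevel_le y hM hS hy j
  rw [div_le_iff₀ (by positivity), inv_mul_eq_div, le_div_iff₀ (by positivity)]
  nlinarith [Nat.cast_nonneg (α := ℝ) #(tailSet y (kahaneLevel M j)),
    one_le_pow₀ (M₀ := ℝ) (a := 2) (n := 2 ^ j) one_le_two]

lemma norm_signedSum_le_kahaneLevel {M : ℝ} (hM : 0 ≤ M) (hy : ∀ n, ‖y n‖ ≤ M)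
    (ε : Fin N → Bool) : ‖signedSum y ε‖ ≤ kahaneLevel M N := by
  have hN : (N : ℝ) ≤ 2 ^ N := by exact_mod_cast N.lt_two_pow_self.le
  calc ‖signedSum y ε‖ ≤ ∑ n, ‖y n‖ := norm_signedSum_le y ε
    _ ≤ N * M := by simpa using sum_le_sum fun n (_ : n ∈ univ) => hy n
    _ ≤ kahaneLevel M N := by
        rw [kahaneLevel]; nlinarith [one_le_pow₀ (M₀ := ℝ) (a := 2) (n := N) one_le_two]

lemma card_tailSet_div_mul_kahaneLevel_rpow_le {M : ℝ} (hM : 0 < M)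
    (hS : Eavg N (fun ε => ‖signedSum y ε‖) ≤ M) (hy : ∀ n, ‖y n‖ ≤ M) {p : ℝ} (hp : 0 ≤ p)
    (j : ℕ) : #(tailSet y (kahaneLevel M j)) / 2 ^ N * kahaneLevel M (j + 1) ^ p ≤
      (18 * M) ^ p * (((2 : ℝ) ^ j) ^ p / 2 ^ 2 ^ j) := by
  have h_level : kahaneLevel M (j + 1) ^ p ≤ (18 * M) ^ p * ((2 : ℝ) ^ j) ^ p := by
    rw [← Real.mul_rpow (by positivity) (by positivity)]
    refine Real.rpow_le_rpow (kahaneLevel_nonneg hM.le _) ?_ hp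
    rw [kahaneLevel, pow_succ]
    nlinarith
  calc #(tailSet y (kahaneLevel M j)) / 2 ^ N * kahaneLevel M (j + 1) ^ p
      ≤ ((2 : ℝ) ^ 2 ^ j)⁻¹ * ((18 * M) ^ p * ((2 : ℝ) ^ j) ^ p) :=
        mul_le_mul (card_tailSet_kahaneLevel_div_le y hM hS hy j) h_level
          (Real.rpow_nonneg (kahaneLevel_nonneg hM.le (j + 1)) p) (by positivity)
    _ = _ := by ring

end Tails

lemma summable_two_pow_rpow_div_two_pow_two_pow (p : ℝ) :
    Summable fun j : ℕ => ((2 : ℝ) ^ j) ^ p / 2 ^ 2 ^ j := by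
  refine summable_of_ratio_norm_eventually_le (r := 1 / 2) (by norm_num) ?_
  filter_upwards [(tendsto_pow_atTop_atTop_of_one_lt one_lt_two).eventually_ge_atTop (p + 1)]
    with j hj
  have ha : 0 ≤ ((2 : ℝ) ^ j) ^ p := by positivity
  have hb : (0 : ℝ) < 2 ^ 2 ^ j := by positivity
  have h_num : ((2 : ℝ) ^ (j + 1)) ^ p = 2 ^ p * ((2 : ℝ) ^ j) ^ p := by
    rw [pow_succ, mul_comm, Real.mul_rpow (by norm_num) (by positivity)]
  have h_den : (2 : ℝ) ^ 2 ^ (j + 1) = 2 ^ 2 ^ j * 2 ^ 2 ^ j := by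
    rw [pow_succ, pow_mul, sq]
  have h_ratio : (2 : ℝ) ^ p / 2 ^ 2 ^ j ≤ 1 / 2 := by
    rw [div_le_div_iff₀ hb two_pos, ← Real.rpow_add_one two_ne_zero, one_mul,
      ← Real.rpow_natCast, Nat.cast_pow, Nat.cast_ofNat]
    exact Real.rpow_le_rpow_of_exponent_le one_le_two hj
  rw [Real.norm_of_nonneg (by positivity), Real.norm_of_nonneg (by positivity), h_num, h_den,
    mul_div_mul_comm]
  exact mul_le_mul_of_nonneg_right h_ratio (by positivity)

def kahaneConst (p : ℝ) : ℝ := 18 * (1 + ∑' j : ℕ, ((2 : ℝ) ^ j) ^ p / 2 ^ 2 ^ j)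

lemma one_le_kahaneConst (p : ℝ) : 1 ≤ kahaneConst p := by
  have : 0 ≤ ∑' j : ℕ, ((2 : ℝ) ^ j) ^ p / 2 ^ 2 ^ j := tsum_nonneg fun j => by positivity
  rw [kahaneConst]
  linarith

theorem Eavg_norm_signedSum_rpow_le {X : Type*} [NormedAddCommGroup X] [NormedSpace ℂ X]
    (y : Fin N → X) {p : ℝ} (hp : 1 ≤ p) :
    Eavg N (fun ε => ‖signedSum y ε‖ ^ p) ≤
      (kahaneConst p * Eavg N (fun ε => ‖signedSum y ε‖)) ^ p := by
  set M := Eavg N (fun ε => ‖signedSum y ε‖)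
  set T := ∑' j : ℕ, ((2 : ℝ) ^ j) ^ p / 2 ^ 2 ^ j
  have hT : 0 ≤ T := tsum_nonneg fun j => by positivity
  have hy := norm_le_Eavg_norm_signedSum y
  rcases (Eavg_nonneg fun ε => norm_nonneg _ : 0 ≤ M).eq_or_lt with hM | hM
  · obtain rfl : y = 0 := funext fun n => norm_le_zero_iff.mp ((hy n).trans_eq hM.symm)
    simp [M, signedSum, Eavg_const, Real.zero_rpow (by linarith : p ≠ 0)]
  calc Eavg N (fun ε => ‖signedSum y ε‖ ^ p)
      ≤ kahaneLevel M 0 ^ p + ∑ j ∈ range N,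
          #(tailSet y (kahaneLevel M j)) / 2 ^ N * kahaneLevel M (j + 1) ^ p :=
        Eavg_rpow_le_add_sum y (by linarith) (kahaneLevel_nonneg hM.le)
          (norm_signedSum_le_kahaneLevel y hM.le hy)
    _ ≤ (18 * M) ^ p + (18 * M) ^ p * T := by
        gcongr
        · exact kahaneLevel_nonneg hM.le 0
        · rw [kahaneLevel]; linarith
        · refine (sum_le_sum fun j _ =>
            card_tailSet_div_mul_kahaneLevel_rpow_le y hM le_rfl hy (by linarith) j).trans ?_
          rw [← mul_sum]
          gcongr
          exact (summable_two_pow_rpow_div_two_pow_two_pow p).sum_le_tsum _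
            fun j _ => by positivity
    _ = (18 * M) ^ p * (1 + T) ^ (1 : ℝ) := by rw [Real.rpow_one]; ring
    _ ≤ (18 * M) ^ p * (1 + T) ^ p := by
        gcongr
        linarith
    _ = (kahaneConst p * M) ^ p := by
        rw [← Real.mul_rpow (by positivity) (by linarith)]
        show (18 * M * (1 + T)) ^ p = (18 * (1 + T) * M) ^ p
        ring_nf

section Integration

open scoped ENNReal

lemma memLp_of_continuous {α E : Type*} [TopologicalSpace α] [CompactSpace α]
    [SecondCountableTopology α] [MeasurableSpace α] [OpensMeasurableSpace α] {μ : Measure α}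
    [IsFiniteMeasure μ] [NormedAddCommGroup E] {f : α → E} (hf : Continuous f) (q : ℝ≥0∞) :
    MemLp f q μ := by
  obtain ⟨C, hC⟩ := isCompact_univ.exists_bound_of_continuousOn hf.continuousOn
  exact .of_bound hf.aestronglyMeasurable C (.of_forall fun z => hC z (Set.mem_univ z))

lemma integral_norm_le_integral_norm_rpow {α E : Type*} [MeasurableSpace α] {μ : Measure α}
    [IsProbabilityMeasure μ] [NormedAddCommGroup E] {f : α → E} {p : ℝ} (hp : 1 ≤ p)
    (hf : MemLp f (ENNReal.ofReal p) μ) :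
    ∫ z, ‖f z‖ ∂μ ≤ (∫ z, ‖f z‖ ^ p ∂μ) ^ (1 / p) := by
  have h := eLpNorm_le_eLpNorm_of_exponent_le (μ := μ)
    (ENNReal.one_le_ofReal.mpr hp) hf.aestronglyMeasurable
  rw [eLpNorm_one_eq_lintegral_enorm,
    ← ofReal_integral_norm_eq_lintegral_enorm (hf.integrable (ENNReal.one_le_ofReal.mpr hp)),
    hf.eLpNorm_eq_integral_rpow_norm (by simp; linarith) (by simp),
    ENNReal.toReal_ofReal (by linarith), ← one_div] at h
  exact (ENNReal.ofReal_le_ofReal_iff (Real.rpow_nonneg (integral_nonneg fun z =>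
    Real.rpow_nonneg (norm_nonneg (f z)) p) _)).mp h

lemma integrable_Eavg {α : Type*} [MeasurableSpace α] {μ : Measure α}
    {f : (Fin N → Bool) → α → ℝ} (hf : ∀ ε, Integrable (f ε) μ) :
    Integrable (fun z => Eavg N (fun ε => f ε z)) μ :=
  (integrable_finsetSum _ fun ε _ => hf ε).const_mul _

lemma integral_Eavg {α : Type*} [MeasurableSpace α] {μ : Measure α}
    {f : (Fin N → Bool) → α → ℝ} (hf : ∀ ε, Integrable (f ε) μ) :
    ∫ z, Eavg N (fun ε => f ε z) ∂μ = Eavg N (fun ε => ∫ z, f ε z ∂μ) := by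
  simp only [Eavg]
  rw [integral_const_mul, integral_finsetSum _ fun ε _ => hf ε]

lemma Eavg_le_Eavg_rpow_rpow {F : (Fin N → Bool) → ℝ} (hF : ∀ ε, 0 ≤ F ε) {p : ℝ}
    (hp : 1 ≤ p) : Eavg N F ≤ Eavg N (fun ε => F ε ^ p) ^ (1 / p) := by
  have h := Real.rpow_arith_mean_le_arith_mean_rpow univ (fun _ => (2 ^ N : ℝ)⁻¹) F
    (fun _ _ => by positivity) (by simp) (fun ε _ => hF ε) hp
  simp only [← mul_sum] at h
  have h_pow : 0 ≤ Eavg N (fun ε => F ε ^ p) := Eavg_nonneg fun ε => Real.rpow_nonneg (hF ε) p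
  rw [one_div, ← Real.rpow_le_rpow_iff (Eavg_nonneg hF) (Real.rpow_nonneg h_pow _)
    (by linarith : 0 < p), Real.rpow_inv_rpow h_pow (by linarith)]
  exact h

end Integration

section Bohr

variable {X : Type*} [NormedAddCommGroup X] [NormedSpace ℂ X]

lemma norm_mon (n : ℕ) (z : ℕ → Circle) : ‖mon n z‖ = 1 := by
  simp [mon, norm_prod, norm_pow, Circle.norm_coe]

lemma continuous_mon (n : ℕ) : Continuous (mon n) :=
  continuous_finsetProd _ fun i _ => (continuous_subtype_val.comp (continuous_apply i)).pow _

/-- `∑ n, bohrTerms x z n` is the Bohr lift `∑ x_n z^{α(n)}` of `∑ x_n n^{-s}`, the index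
`n : Fin N` standing for the integer `n + 1`. -/
def bohrTerms (x : Fin N → X) (z : ℕ → Circle) (n : Fin N) : X := mon ((n : ℕ) + 1) z • x n

lemma continuous_signedSum_bohrTerms (x : Fin N → X) (ε : Fin N → Bool) :
    Continuous fun z => signedSum (bohrTerms x z) ε :=
  continuous_finsetSum _ fun _ _ => continuous_const.smul ((continuous_mon _).smul continuous_const)

lemma Hnorm_sgn_smul (p : ℝ) (x : Fin N → X) (ε : Fin N → Bool) :
    Hnorm p N (fun n => sgn ε n • x n) =
      (∫ z, ‖signedSum (bohrTerms x z) ε‖ ^ p ∂muTN) ^ (1 / p) := by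
  simp only [Hnorm, signedSum, bohrTerms, smul_comm (sgn ε _)]

lemma Hnorm_nonneg (p : ℝ) (x : Fin N → X) : 0 ≤ Hnorm p N x := by
  unfold Hnorm; positivity

lemma Eavg_norm_signedSum_bohrTerms_le (x : Fin N → X) (z : ℕ → Circle) :
    Eavg N (fun ε => ‖signedSum (bohrTerms x z) ε‖) ≤ 2 * Eavg N (fun ε => ‖signedSum x ε‖) :=
  Eavg_norm_signedSum_smul_le x fun _ => (norm_mon _ z).le

lemma Eavg_norm_signedSum_le_bohrTerms (x : Fin N → X) (z : ℕ → Circle) :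
    Eavg N (fun ε => ‖signedSum x ε‖) ≤ 2 * Eavg N (fun ε => ‖signedSum (bohrTerms x z) ε‖) := by
  have h_ne : ∀ n : Fin N, mon ((n : ℕ) + 1) z ≠ 0 := fun n h => by
    simpa [h] using norm_mon ((n : ℕ) + 1) z
  have h_inv : (fun n : Fin N => (mon ((n : ℕ) + 1) z)⁻¹ • bohrTerms x z n) = x :=
    funext fun n => by rw [bohrTerms, smul_smul, inv_mul_cancel₀ (h_ne n), one_smul]
  simpa [h_inv] using Eavg_norm_signedSum_smul_le (bohrTerms x z)
    (a := fun n : Fin N => (mon ((n : ℕ) + 1) z)⁻¹) fun n => by rw [norm_inv, norm_mon, inv_one]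

lemma Eavg_norm_signedSum_le_two_mul_Eavg_Hnorm {p : ℝ} (hp : 1 ≤ p) (x : Fin N → X) :
    Eavg N (fun ε => ‖signedSum x ε‖) ≤
      2 * Eavg N (fun ε => Hnorm p N (fun n => sgn ε n • x n)) := by
  have h_int : ∀ ε, Integrable (fun z => ‖signedSum (bohrTerms x z) ε‖) muTN := fun ε =>
    ((memLp_of_continuous (continuous_signedSum_bohrTerms x ε) 1).integrable le_rfl).norm
  calc Eavg N (fun ε => ‖signedSum x ε‖)
      = ∫ _, Eavg N (fun ε => ‖signedSum x ε‖) ∂muTN := by simp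
    _ ≤ ∫ z, 2 * Eavg N (fun ε => ‖signedSum (bohrTerms x z) ε‖) ∂muTN :=
        integral_mono (integrable_const _) ((integrable_Eavg h_int).const_mul _)
          fun z => Eavg_norm_signedSum_le_bohrTerms x z
    _ = 2 * Eavg N (fun ε => ∫ z, ‖signedSum (bohrTerms x z) ε‖ ∂muTN) := by
        rw [integral_const_mul, integral_Eavg h_int]
    _ ≤ 2 * Eavg N (fun ε => Hnorm p N (fun n => sgn ε n • x n)) := by
        refine mul_le_mul_of_nonneg_left (Eavg_mono fun ε => ?_) two_pos.le
        rw [Hnorm_sgn_smul]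
        exact integral_norm_le_integral_norm_rpow hp
          (memLp_of_continuous (continuous_signedSum_bohrTerms x ε) _)

lemma Eavg_Hnorm_le {p : ℝ} (hp : 1 ≤ p) (x : Fin N → X) :
    Eavg N (fun ε => Hnorm p N (fun n => sgn ε n • x n)) ≤
      2 * kahaneConst p * Eavg N (fun ε => ‖signedSum x ε‖) := by
  set R := Eavg N (fun ε => ‖signedSum x ε‖)
  have hR : 0 ≤ 2 * kahaneConst p * R := by
    have := one_le_kahaneConst p
    positivity [Eavg_nonneg fun ε => norm_nonneg (signedSum x ε)]
  have h_int : ∀ ε, Integrable (fun z => ‖signedSum (bohrTerms x z) ε‖ ^ p) muTN := fun ε => by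
    simpa [ENNReal.toReal_ofReal (by linarith : 0 ≤ p)] using
      (memLp_of_continuous (μ := muTN) (continuous_signedSum_bohrTerms x ε)
        (ENNReal.ofReal p)).integrable_norm_rpow'
  have h_pow : ∀ ε, Hnorm p N (fun n => sgn ε n • x n) ^ p =
      ∫ z, ‖signedSum (bohrTerms x z) ε‖ ^ p ∂muTN := fun ε => by
    rw [Hnorm_sgn_smul, one_div, Real.rpow_inv_rpow (integral_nonneg fun z => by positivity)
      (by linarith)]
  calc Eavg N (fun ε => Hnorm p N (fun n => sgn ε n • x n))
      ≤ Eavg N (fun ε => Hnorm p N (fun n => sgn ε n • x n) ^ p) ^ (1 / p) :=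
        Eavg_le_Eavg_rpow_rpow (fun ε => Hnorm_nonneg p _) hp
    _ = (∫ z, Eavg N (fun ε => ‖signedSum (bohrTerms x z) ε‖ ^ p) ∂muTN) ^ (1 / p) := by
        simp only [h_pow, integral_Eavg h_int]
    _ ≤ (∫ _, (2 * kahaneConst p * R) ^ p ∂muTN) ^ (1 / p) := by
        gcongr ?_ ^ _
        · exact integral_nonneg fun z => Eavg_nonneg fun ε => by positivity
        refine integral_mono (integrable_Eavg h_int) (integrable_const _) fun z => ?_
        refine (Eavg_norm_signedSum_rpow_le _ hp).trans (Real.rpow_le_rpow ?_ ?_ (by linarith))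
        · exact mul_nonneg (by linarith [one_le_kahaneConst p]) (Eavg_nonneg fun ε => norm_nonneg _)
        rw [mul_comm 2, mul_assoc]
        exact mul_le_mul_of_nonneg_left (Eavg_norm_signedSum_bohrTerms_le x z)
          (by linarith [one_le_kahaneConst p])
    _ = 2 * kahaneConst p * R := by
        rw [integral_const, probReal_univ, one_smul, one_div, Real.rpow_rpow_inv hR (by linarith)]

end Bohr

end Rademacher

open Rademacher

/-- **Proposition.** For every `1 ≤ p < ∞` there is a constant `C_p ≥ 1`, depending only on `p`,
such that for every complex Banach space `X` and all `x_1, …, x_N ∈ X`, the `H_p^{rad}`-norm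
`E_ε ‖∑ ε_n x_n n^{-s}‖_{H_p(X)}` is equivalent to the `Rad(X)`-norm `E_ε ‖∑ ε_n x_n‖`. -/
theorem stmt4 (p : ℝ) (hp : 1 ≤ p) :
    ∃ C : ℝ, 1 ≤ C ∧ ∀ (X : Type u) (_ : NormedAddCommGroup X) (_ : NormedSpace ℂ X)
      (_ : CompleteSpace X) (N : ℕ) (x : Fin N → X),
      (1 / C) * Eavg N (fun ε => Hnorm p N (fun n => sgn ε n • x n)) ≤
          Eavg N (fun ε => ‖∑ n : Fin N, sgn ε n • x n‖) ∧
        Eavg N (fun ε => ‖∑ n : Fin N, sgn ε n • x n‖) ≤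
          C * Eavg N (fun ε => Hnorm p N (fun n => sgn ε n • x n)) := by
  have hK := one_le_kahaneConst p
  refine ⟨2 * kahaneConst p, by linarith, fun X _ _ _ N x => ?_⟩
  have h_upper := Eavg_Hnorm_le hp x
  have h_lower := Eavg_norm_signedSum_le_two_mul_Eavg_Hnorm hp x
  have h_nonneg : 0 ≤ Eavg N (fun ε => Hnorm p N (fun n => sgn ε n • x n)) :=
    Eavg_nonneg fun ε => Hnorm_nonneg p _
  simp only [signedSum] at h_upper h_lower
  constructor
  · rw [one_div, inv_mul_le_iff₀ (by linarith)]
    exact h_upper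
  · nlinarith
end
end

section
/- Let X = L^1(𝕋^2) (complex-valued, with respect to the Haar probability measure on 𝕋^2) and define x_n ∈ X by x_n(w_1,w_2) = w_1^k if n = 2^k for some integer k ≥ 0, and x_n(w_1,w_2) = w_2^{2^n} otherwise. Then there exists C ≥ 1 such that for every N and all scalars a_1,…,a_N ∈ ℂ: E_ε (∫_𝕋 ‖∑_{n=1}^N ε_n a_n x_n z^n‖_X^2 dz)^{1/2} ≤ C (∫_𝕋 ‖∑_{n=1}^N a_n x_n z^n‖_X^2 dz)^{1/2}; that is, (x_n z^n)_n is RUC in H_2(𝕋, X). -/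
open MeasureTheory TopologicalSpace

noncomputable section

open Classical in
/-- The function `(w₁, w₂) ↦ w₁^k` if `n = 2^k` for some `k ≥ 0`, and `(w₁, w₂) ↦ w₂^{2^n}`
otherwise.  (When `n = 2^k` we have `k = Nat.log 2 n`.) -/
def fnPow2 (n : ℕ) : Circle × Circle → ℂ :=
  fun w => if ∃ k, n = 2 ^ k then (w.1 : ℂ) ^ (Nat.log 2 n) else (w.2 : ℂ) ^ (2 ^ n)

lemma memLp_fnPow2 (n : ℕ) : MemLp (fnPow2 n) 1 (muT.prod muT) := by
  have hc : Continuous (fnPow2 n) := by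
    unfold fnPow2
    split
    · exact (continuous_subtype_val.comp continuous_fst).pow _
    · exact (continuous_subtype_val.comp continuous_snd).pow _
  refine MemLp.of_bound hc.aestronglyMeasurable 1 (Filter.Eventually.of_forall ?_)
  intro w
  unfold fnPow2
  split <;> simp [Circle.norm_coe]

/-- The element `x_n` of `X = L¹(𝕋²)`: the class of `w ↦ w₁^k` if `n = 2^k`, and of
`w ↦ w₂^{2^n}` otherwise. -/
def xPow2 (n : ℕ) : Lp ℂ 1 (muT.prod muT) := (memLp_fnPow2 n).toLp _

/-!
Write `u = (z, w) ∈ 𝕋 × 𝕋²`. Each `z ^ n x_n(w)` is a character of `𝕋³`, with frequency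
`(n, k, 0)` if `n = 2 ^ k` and `(n, 0, 2 ^ n)` otherwise, and a sum of two of these frequencies
determines the pair. Hence `F(u) = ∑ c_n z ^ n x_n(w)` satisfies `‖F‖₂² = ∑ |c_n|²` and
`‖F‖₄⁴ ≤ 2 ‖F‖₂⁴`, and Hölder's inequality turns the latter into `‖F‖₂ ≤ √2 ‖F‖₁`. By Fubini the
`H₂(𝕋, X)`-norm of `∑ c_n x_n z ^ n` lies between `‖F‖₁` and `‖F‖₂`, so it is equivalent to
`(∑ |c_n|²)^{1/2}` up to the factor `√2`, and that quantity does not see the signs.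
-/

open ComplexConjugate Finset

theorem sym2_eq_of_two_pow_add_two_pow_eq {a b c d : ℕ} (h : 2 ^ a + 2 ^ b = 2 ^ c + 2 ^ d) :
    s(a, b) = s(c, d) := by
  wlog hab : a ≤ b generalizing a b
  · rw [Sym2.eq_swap]; exact this (by omega) (by omega)
  wlog hcd : c ≤ d generalizing c d
  · rw [Sym2.eq_swap (a := c)]; exact this (by omega) (by omega)
  wlog hac : a ≤ c generalizing a b c d
  · exact (this hcd h.symm hab (by omega)).symm
  obtain rfl | hac := hac.eq_or_lt
  · rw [Nat.pow_right_injective le_rfl (by omega : 2 ^ b = 2 ^ d)]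
  exfalso
  have hc : 2 ^ a * 2 ≤ 2 ^ c := pow_succ 2 a ▸ Nat.pow_le_pow_right two_pos hac
  obtain rfl | hab := hab.eq_or_lt
  · have := Nat.pow_le_pow_right two_pos hcd
    have := Nat.two_pow_pos a
    linarith
  · have hdvd : 2 ^ (a + 1) ∣ 2 ^ a + 2 ^ b :=
      h ▸ dvd_add (pow_dvd_pow 2 hac) (pow_dvd_pow 2 (by omega))
    exact (Nat.pow_lt_pow_right one_lt_two a.lt_succ_self).not_ge
      (Nat.le_of_dvd (Nat.two_pow_pos a) ((Nat.dvd_add_left (pow_dvd_pow 2 hab)).mp hdvd))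

theorem exponents_of_two_pow_eq_two_pow_add_two_pow {a b c : ℕ} (h : 2 ^ a = 2 ^ b + 2 ^ c) :
    b = c ∧ a = b + 1 := by
  obtain _ | a := a
  · have := Nat.two_pow_pos b; have := Nat.two_pow_pos c; omega
  have := sym2_eq_of_two_pow_add_two_pow_eq (a := a) (b := a) (c := b) (d := c)
    (by rw [← h, pow_succ]; ring)
  rw [Sym2.eq_iff] at this; omega

open Classical in
def freq (n : ℕ) : ℕ × ℕ × ℕ := if n.isPowerOfTwo then (n, Nat.log 2 n, 0) else (n, 0, 2 ^ n)

theorem freq_fst (n : ℕ) : (freq n).1 = n := by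
  unfold freq; split_ifs <;> rfl

theorem freq_two_pow (k : ℕ) : freq (2 ^ k) = (2 ^ k, k, 0) := by
  rw [freq, if_pos ⟨k, rfl⟩, Nat.log_pow one_lt_two]

theorem freq_of_not_isPowerOfTwo {n : ℕ} (h : ¬ n.isPowerOfTwo) : freq n = (n, 0, 2 ^ n) :=
  if_neg h

theorem isPowerOfTwo_of_freq_snd_snd_eq_zero {n : ℕ} (h : (freq n).2.2 = 0) :
    n.isPowerOfTwo := by
  by_contra hn
  simp [freq_of_not_isPowerOfTwo hn] at h

theorem sym2_eq_of_freq_two_pow_add_freq_two_pow_eq {k k' l l' : ℕ}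
    (h : freq (2 ^ k) + freq (2 ^ k') = freq l + freq l') : s(2 ^ k, 2 ^ k') = s(l, l') := by
  have h3 := congrArg (fun v => v.2.2) h
  simp only [freq_two_pow, Prod.snd_add, add_zero] at h3
  obtain ⟨j, rfl⟩ := isPowerOfTwo_of_freq_snd_snd_eq_zero (by omega : (freq l).2.2 = 0)
  obtain ⟨j', rfl⟩ := isPowerOfTwo_of_freq_snd_snd_eq_zero (by omega : (freq l').2.2 = 0)
  simp only [freq_two_pow, Prod.mk_add_mk, Prod.mk.injEq] at h
  exact congrArg (Sym2.map (2 ^ ·)) (sym2_eq_of_two_pow_add_two_pow_eq h.1)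

theorem freq_two_pow_add_freq_ne {k m l l' : ℕ} (hm : ¬ m.isPowerOfTwo)
    (hl : ¬ l.isPowerOfTwo) (hl' : ¬ l'.isPowerOfTwo) :
    freq (2 ^ k) + freq m ≠ freq l + freq l' := by
  intro h
  simp only [freq_two_pow, freq_of_not_isPowerOfTwo, hm, hl, hl', not_false_eq_true,
    Prod.mk_add_mk, Prod.mk.injEq] at h
  -- the coordinates give `l = l'`, `m = l + 1` and `k = 0`, hence `l = 2`
  obtain ⟨h1, h2, h3⟩ := h
  obtain ⟨rfl, rfl⟩ := exponents_of_two_pow_eq_two_pow_add_two_pow (by simpa using h3)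
  simp at h2; subst h2
  exact hl ⟨1, by simp at h1; omega⟩

theorem sym2_eq_of_freq_add_freq_eq {m m' l l' : ℕ} (h : freq m + freq m' = freq l + freq l') :
    s(m, m') = s(l, l') := by
  wlog hm : m.isPowerOfTwo ∨ ¬ m'.isPowerOfTwo generalizing m m'
  · rw [Sym2.eq_swap]; exact this (by rwa [add_comm]) (by tauto)
  wlog hl : l.isPowerOfTwo ∨ ¬ l'.isPowerOfTwo generalizing l l'
  · rw [Sym2.eq_swap (a := l)]; exact this (by rwa [add_comm (freq l')]) (by tauto)
  by_cases hPP : m.isPowerOfTwo ∧ m'.isPowerOfTwo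
  · obtain ⟨⟨k, rfl⟩, ⟨k', rfl⟩⟩ := hPP
    exact sym2_eq_of_freq_two_pow_add_freq_two_pow_eq h
  by_cases hPP' : l.isPowerOfTwo ∧ l'.isPowerOfTwo
  · obtain ⟨⟨j, rfl⟩, ⟨j', rfl⟩⟩ := hPP'
    exact (sym2_eq_of_freq_two_pow_add_freq_two_pow_eq h.symm).symm
  have hm' : ¬ m'.isPowerOfTwo := by tauto
  have hl' : ¬ l'.isPowerOfTwo := by tauto
  obtain ⟨k, rfl⟩ | hm := em m.isPowerOfTwo <;> obtain ⟨j, rfl⟩ | hl := em l.isPowerOfTwo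
  · simp only [freq_two_pow, freq_of_not_isPowerOfTwo, hm', hl', not_false_eq_true,
      Prod.mk_add_mk, Prod.mk.injEq] at h
    obtain rfl := Nat.pow_right_injective le_rfl (by simpa using h.2.2)
    rw [Nat.add_right_cancel h.1]
  · exact absurd h (freq_two_pow_add_freq_ne hm' hl hl')
  · exact absurd h.symm (freq_two_pow_add_freq_ne hl' hm hm')
  · simp only [freq_of_not_isPowerOfTwo, hm, hm', hl, hl', not_false_eq_true,
      Prod.mk_add_mk, Prod.mk.injEq] at h
    exact sym2_eq_of_two_pow_add_two_pow_eq h.2.2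

theorem sum_sum_ite_mul_le {κ β : Type*} [Fintype κ] [DecidableEq β] (K : κ → β) (x : κ → ℝ)
    {M : ℕ} (hK : ∀ p, #{q | K q = K p} ≤ M) :
    ∑ p, ∑ q, (if K p = K q then x p * x q else 0) ≤ M * ∑ p, x p ^ 2 := by
  have hsymm : ∑ p, ∑ q, (if K p = K q then x q ^ 2 else 0)
      = ∑ p, ∑ q, (if K p = K q then x p ^ 2 else 0) := by
    rw [sum_comm]
    exact sum_congr rfl fun p _ => sum_congr rfl fun q _ => if_congr eq_comm rfl rfl
  calc ∑ p, ∑ q, (if K p = K q then x p * x q else 0)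
      ≤ ∑ p, ∑ q,
          ((if K p = K q then x p ^ 2 else 0) + (if K p = K q then x q ^ 2 else 0)) / 2 := by
        gcongr with p _ q _
        split_ifs
        · nlinarith [sq_nonneg (x p - x q)]
        · simp
    _ = ∑ p, ∑ q, (if K p = K q then x p ^ 2 else 0) := by
        simp only [← sum_div, sum_add_distrib, hsymm]; ring
    _ = ∑ p, #{q | K q = K p} * x p ^ 2 := by
        refine sum_congr rfl fun p _ => ?_
        rw [← sum_filter, sum_const, nsmul_eq_mul]
        simp only [@eq_comm _ (K p)]
    _ ≤ ∑ p, M * x p ^ 2 := by gcongr with p; exact_mod_cast hK p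
    _ = M * ∑ p, x p ^ 2 := (mul_sum ..).symm

section Characters

variable {G : Type*} [Group G] [TopologicalSpace G] [MeasurableSpace G] [MeasurableMul G]
  {μ : Measure G} [μ.IsMulLeftInvariant]

theorem integral_pontryaginDual_eq_zero {χ : PontryaginDual G} (hχ : χ ≠ 1) :
    ∫ g, (χ g : ℂ) ∂μ = 0 := by
  obtain ⟨c, hc⟩ : ∃ c, χ c ≠ 1 := by
    by_contra! h
    exact hχ (PontryaginDual.ext h)
  have hc' : (χ c : ℂ) ≠ 1 := fun h => hc (Circle.coe_injective (by simpa using h))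
  have h := integral_mul_left_eq_self (μ := μ) (fun g => (χ g : ℂ)) c
  simp only [map_mul, Circle.coe_mul, integral_const_mul] at h
  by_contra hI
  exact hc' ((mul_eq_right₀ hI).mp h)

variable [IsProbabilityMeasure μ]

open Classical in
theorem integral_pontryaginDual_mul_conj (χ ψ : PontryaginDual G) :
    ∫ g, (χ g : ℂ) * conj (ψ g : ℂ) ∂μ = if χ = ψ then 1 else 0 := by
  have h : ∀ g, (χ g : ℂ) * conj (ψ g : ℂ) = ((χ / ψ) g : ℂ) := fun g => by
    rw [← Circle.coe_inv_eq_conj, ← Circle.coe_mul, ← div_eq_mul_inv]; rfl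
  simp only [h]
  split_ifs with hχψ
  · simp [hχψ]
  · exact integral_pontryaginDual_eq_zero (div_ne_one.mpr hχψ)

omit [MeasurableSpace G] [MeasurableMul G] in
theorem continuous_coe_pontryaginDual (χ : PontryaginDual G) : Continuous fun g => (χ g : ℂ) :=
  continuous_subtype_val.comp (map_continuous χ)

variable [CompactSpace G] [OpensMeasurableSpace G] {ι : Type*} [Fintype ι]

open Classical in
theorem integral_norm_sum_mul_pontryaginDual_sq (χ : ι → PontryaginDual G) (c : ι → ℂ) :
    ((∫ g, ‖∑ i, c i * χ i g‖ ^ 2 ∂μ : ℝ) : ℂ)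
      = ∑ i, ∑ j, if χ i = χ j then c i * conj (c j) else 0 := by
  have hint : ∀ i j,
      Integrable (fun g => c i * conj (c j) * ((χ i g : ℂ) * conj (χ j g : ℂ))) μ := fun i j => by
    have := (continuous_coe_pontryaginDual (χ i)).mul
      (Complex.continuous_conj.comp (continuous_coe_pontryaginDual (χ j)))
    exact (continuous_const.mul this).integrable_of_hasCompactSupport (.of_compactSpace _)
  have hsq : ∀ g, ((‖∑ i, c i * χ i g‖ ^ 2 : ℝ) : ℂ)
      = ∑ i, ∑ j, c i * conj (c j) * ((χ i g : ℂ) * conj (χ j g : ℂ)) := fun g => by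
    rw [Complex.ofReal_pow, ← Complex.mul_conj', map_sum, sum_mul_sum]
    simp only [map_mul]
    congr! 2 with i _ j _
    ring
  calc ((∫ g, ‖∑ i, c i * χ i g‖ ^ 2 ∂μ : ℝ) : ℂ)
      = ∫ g, ∑ i, ∑ j, c i * conj (c j) * ((χ i g : ℂ) * conj (χ j g : ℂ)) ∂μ := by
        simp only [← hsq]
        exact integral_ofReal.symm
    _ = ∑ i, ∑ j, c i * conj (c j) * ∫ g, (χ i g : ℂ) * conj (χ j g : ℂ) ∂μ := by
        rw [integral_finsetSum _ fun i _ => integrable_finsetSum _ fun j _ => hint i j]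
        simp_rw [integral_finsetSum _ fun j _ => hint _ j, integral_const_mul]
    _ = ∑ i, ∑ j, if χ i = χ j then c i * conj (c j) else 0 := by
        simp only [integral_pontryaginDual_mul_conj, mul_ite, mul_one, mul_zero]

theorem integral_norm_sum_mul_pontryaginDual_sq_of_injective {χ : ι → PontryaginDual G}
    (hχ : Function.Injective χ) (c : ι → ℂ) :
    ∫ g, ‖∑ i, c i * χ i g‖ ^ 2 ∂μ = ∑ i, ‖c i‖ ^ 2 := by
  apply Complex.ofReal_injective
  classical
  rw [integral_norm_sum_mul_pontryaginDual_sq]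
  simp [hχ.eq_iff, Complex.mul_conj']

theorem integral_norm_sum_mul_pontryaginDual_pow_four_le {χ : ι → PontryaginDual G}
    (hχ : ∀ i j k l, χ i * χ j = χ k * χ l → s(i, j) = s(k, l)) (c : ι → ℂ) :
    ∫ g, ‖∑ i, c i * χ i g‖ ^ 4 ∂μ ≤ 2 * (∑ i, ‖c i‖ ^ 2) ^ 2 := by
  classical
  set ψ : ι × ι → PontryaginDual G := fun p => χ p.1 * χ p.2
  set d : ι × ι → ℂ := fun p => c p.1 * c p.2
  have hsq : ∀ g, (∑ i, c i * χ i g) ^ 2 = ∑ p, d p * ψ p g := fun g => by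
    rw [sq, sum_mul_sum, ← Fintype.sum_prod_type']
    congr! 1 with p
    rw [show ((ψ p) g : ℂ) = χ p.1 g * χ p.2 g from rfl]
    ring
  have hfiber : ∀ p, #{q | ψ q = ψ p} ≤ 2 := fun p => by
    have hsub : ({q | ψ q = ψ p} : Finset (ι × ι)) ⊆ {p, p.swap} := fun q hq => by
      have := hχ _ _ _ _ (mem_filter.mp hq).2
      rw [Sym2.eq_iff] at this
      rcases this with ⟨h1, h2⟩ | ⟨h1, h2⟩ <;> simp [Prod.ext_iff, h1, h2]
    exact (card_le_card hsub).trans card_le_two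
  have hnonneg : 0 ≤ ∫ g, ‖∑ p, d p * ψ p g‖ ^ 2 ∂μ := integral_nonneg fun g => by positivity
  calc ∫ g, ‖∑ i, c i * χ i g‖ ^ 4 ∂μ
      = ‖((∫ g, ‖∑ p, d p * ψ p g‖ ^ 2 ∂μ : ℝ) : ℂ)‖ := by
        rw [Complex.norm_real, Real.norm_of_nonneg hnonneg]
        congr 1 with g
        rw [← hsq, norm_pow, ← pow_mul]
    _ ≤ ∑ p, ∑ q, if ψ p = ψ q then ‖d p‖ * ‖d q‖ else 0 := by
        rw [integral_norm_sum_mul_pontryaginDual_sq]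
        refine (norm_sum_le _ _).trans (sum_le_sum fun p _ => (norm_sum_le _ _).trans ?_)
        gcongr with q
        split_ifs <;> simp
    _ ≤ 2 * ∑ p, ‖d p‖ ^ 2 := by exact_mod_cast sum_sum_ite_mul_le ψ (‖d ·‖) hfiber
    _ = 2 * (∑ i, ‖c i‖ ^ 2) ^ 2 := by
        simp only [d, norm_mul, mul_pow, sq (∑ i, _), sum_mul_sum, Fintype.sum_prod_type]

end Characters

section Moments

variable {α : Type*} [MeasurableSpace α] {μ : Measure α}

theorem sq_integral_le_integral_sq [IsProbabilityMeasure μ] {f : α → ℝ} (hf : MemLp f 2 μ) :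
    (∫ x, f x ∂μ) ^ 2 ≤ ∫ x, f x ^ 2 ∂μ := by
  have := ProbabilityTheory.variance_nonneg f μ
  rw [ProbabilityTheory.variance_eq_sub hf, sub_nonneg] at this
  simpa using this

variable [TopologicalSpace α] [CompactSpace α] [OpensMeasurableSpace α] [IsFiniteMeasure μ]

theorem integral_sq_pow_three_le {f : α → ℝ} (hf : Continuous f) (hf0 : ∀ x, 0 ≤ f x) :
    (∫ x, f x ^ 2 ∂μ) ^ 3 ≤ (∫ x, f x ∂μ) ^ 2 * ∫ x, f x ^ 4 ∂μ := by
  have hrpow : ∀ x (r s : ℝ), (f x ^ r) ^ s = f x ^ (r * s) := fun x r s =>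
    (Real.rpow_mul (hf0 x) r s).symm
  have hmemLp : ∀ r : ℝ, 0 ≤ r → ∀ p, MemLp (fun x => f x ^ r) p μ := fun r hr p =>
    (hf.rpow_const fun x => Or.inr hr).memLp_of_hasCompactSupport (.of_compactSpace _)
  -- Hölder with exponents `3/2` and `3`, applied to `f ^ 2 = f ^ (2/3) * f ^ (4/3)`
  have hH := integral_mul_le_Lp_mul_Lq_of_nonneg (μ := μ)
    (Real.holderConjugate_iff.mpr ⟨by norm_num, by norm_num⟩ : (3 / 2 : ℝ).HolderConjugate 3)
    (ae_of_all _ fun x => Real.rpow_nonneg (hf0 x) (2 / 3))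
    (ae_of_all _ fun x => Real.rpow_nonneg (hf0 x) (4 / 3))
    (hmemLp _ (by norm_num) _) (hmemLp _ (by norm_num) _)
  simp only [hrpow, ← Real.rpow_add' (hf0 _) (by norm_num : (2 / 3 + 4 / 3 : ℝ) ≠ 0)] at hH
  norm_num at hH
  have hI : 0 ≤ ∫ x, f x ∂μ := integral_nonneg hf0
  have hI4 : 0 ≤ ∫ x, f x ^ 4 ∂μ := integral_nonneg fun x => pow_nonneg (hf0 x) 4
  calc (∫ x, f x ^ 2 ∂μ) ^ 3
      ≤ ((∫ x, f x ∂μ) ^ (2 / 3 : ℝ) * (∫ x, f x ^ 4 ∂μ) ^ (1 / 3 : ℝ)) ^ 3 :=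
        pow_le_pow_left₀ (integral_nonneg fun x => sq_nonneg (f x)) hH 3
    _ = (∫ x, f x ∂μ) ^ 2 * ∫ x, f x ^ 4 ∂μ := by
        rw [mul_pow, ← Real.rpow_mul_natCast hI, ← Real.rpow_mul_natCast hI4]
        norm_num

theorem integral_sq_le_of_integral_pow_four_le {f : α → ℝ} (hf : Continuous f)
    (hf0 : ∀ x, 0 ≤ f x) {K : ℝ} (hK0 : 0 ≤ K)
    (hK : ∫ x, f x ^ 4 ∂μ ≤ K * (∫ x, f x ^ 2 ∂μ) ^ 2) :
    ∫ x, f x ^ 2 ∂μ ≤ K * (∫ x, f x ∂μ) ^ 2 := by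
  have h3 := (integral_sq_pow_three_le (μ := μ) hf hf0).trans
    (mul_le_mul_of_nonneg_left hK (sq_nonneg _))
  obtain h0 | hpos := (integral_nonneg fun x => sq_nonneg (f x) : 0 ≤ ∫ x, f x ^ 2 ∂μ).eq_or_lt
  · rw [← h0]; positivity
  · nlinarith [pow_pos hpos 2]

end Moments

theorem eq_of_forall_circle_pow_eq {a b : ℕ} (h : ∀ z : Circle, z ^ a = z ^ b) : a = b := by
  by_contra hne
  wlog hab : a < b generalizing a b
  · exact this (fun z => (h z).symm) (Ne.symm hne) (by omega)
  obtain ⟨d, rfl⟩ := Nat.exists_eq_add_of_lt hab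
  -- at `z = exp (π / (d + 1))` the two powers differ by the factor `z ^ (d + 1) = -1`
  have hpow : Circle.exp (Real.pi / (d + 1)) ^ (d + 1) = Circle.exp Real.pi := by
    rw [← Circle.exp_natCast_mul]
    congr 1
    push_cast
    field_simp
  have hz := h (Circle.exp (Real.pi / (d + 1)))
  rw [add_assoc, pow_add, hpow] at hz
  exact Circle.exp_pi_ne_one (by simpa using hz.symm)

def torusChar (v : ℕ × ℕ × ℕ) : PontryaginDual (Circle × Circle × Circle) where
  toFun u := u.1 ^ v.1 * u.2.1 ^ v.2.1 * u.2.2 ^ v.2.2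
  map_one' := by simp
  map_mul' u u' := by simp only [Prod.fst_mul, Prod.snd_mul, mul_pow]; ac_rfl
  continuous_toFun := by fun_prop

theorem torusChar_apply (v : ℕ × ℕ × ℕ) (u : Circle × Circle × Circle) :
    torusChar v u = u.1 ^ v.1 * u.2.1 ^ v.2.1 * u.2.2 ^ v.2.2 := rfl

theorem torusChar_add (v w : ℕ × ℕ × ℕ) : torusChar (v + w) = torusChar v * torusChar w := by
  refine PontryaginDual.ext fun u => ?_
  change torusChar (v + w) u = torusChar v u * torusChar w u
  simp only [torusChar_apply, Prod.fst_add, Prod.snd_add, pow_add]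
  ac_rfl

theorem torusChar_injective : Function.Injective torusChar := by
  intro v w h
  have h' : ∀ u, torusChar v u = torusChar w u := fun u => by rw [h]
  ext
  · exact eq_of_forall_circle_pow_eq fun z => by simpa [torusChar_apply] using h' (z, 1, 1)
  · exact eq_of_forall_circle_pow_eq fun z => by simpa [torusChar_apply] using h' (1, z, 1)
  · exact eq_of_forall_circle_pow_eq fun z => by simpa [torusChar_apply] using h' (1, 1, z)

theorem coe_torusChar_freq (n : ℕ) (z : Circle) (w : Circle × Circle) :
    (torusChar (freq n) (z, w) : ℂ) = (z : ℂ) ^ n * fnPow2 n w := by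
  unfold freq fnPow2
  split_ifs <;> first | contradiction | simp [torusChar_apply]

instance : muT.IsMulLeftInvariant := Measure.isMulLeftInvariant_haarMeasure ⊤

-- instance search does not find this through the nested product
instance : (muT.prod (muT.prod muT)).IsMulLeftInvariant := Measure.prod.instIsMulLeftInvariant

local notation "μ₃" => muT.prod (muT.prod muT)

variable {N : ℕ}

def torusPoly (c : Fin N → ℂ) (u : Circle × Circle × Circle) : ℂ :=
  ∑ n : Fin N, c n * torusChar (freq (n + 1)) u

theorem continuous_torusPoly (c : Fin N → ℂ) : Continuous (torusPoly c) :=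
  continuous_finsetSum _ fun _ _ => continuous_const.mul (continuous_coe_pontryaginDual _)

theorem integrable_torusPoly_norm_pow (c : Fin N → ℂ) (p : ℕ) :
    Integrable (fun u => ‖torusPoly c u‖ ^ p) μ₃ :=
  ((continuous_torusPoly c).norm.pow p).integrable_of_hasCompactSupport (.of_compactSpace _)

theorem integral_norm_torusPoly_sq (c : Fin N → ℂ) :
    ∫ u, ‖torusPoly c u‖ ^ 2 ∂μ₃ = ∑ n, ‖c n‖ ^ 2 :=
  integral_norm_sum_mul_pontryaginDual_sq_of_injective (torusChar_injective.comp
    fun m n h => Fin.ext (by simpa [freq_fst] using congrArg Prod.fst h)) c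

theorem integral_norm_torusPoly_pow_four_le (c : Fin N → ℂ) :
    ∫ u, ‖torusPoly c u‖ ^ 4 ∂μ₃ ≤ 2 * (∑ n, ‖c n‖ ^ 2) ^ 2 := by
  refine integral_norm_sum_mul_pontryaginDual_pow_four_le (fun i j k l h => ?_) c
  rw [← torusChar_add, ← torusChar_add] at h
  have := sym2_eq_of_freq_add_freq_eq (torusChar_injective h)
  simp only [Sym2.eq_iff, Nat.add_right_cancel_iff, Fin.val_inj] at this ⊢
  exact this

theorem sum_norm_sq_le_integral_norm_torusPoly (c : Fin N → ℂ) :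
    ∑ n, ‖c n‖ ^ 2 ≤ 2 * (∫ u, ‖torusPoly c u‖ ∂μ₃) ^ 2 := by
  rw [← integral_norm_torusPoly_sq]
  refine integral_sq_le_of_integral_pow_four_le (continuous_torusPoly c).norm
    (fun u => norm_nonneg _) zero_le_two ?_
  rw [integral_norm_torusPoly_sq]
  exact integral_norm_torusPoly_pow_four_le c

theorem L1.norm_sum_smul_toLp {α ι E : Type*} [MeasurableSpace α] [NormedAddCommGroup E]
    [NormedSpace ℂ E] {μ : Measure α} (s : Finset ι) (b : ι → ℂ) {f : ι → α → E}
    (hf : ∀ i, MemLp (f i) 1 μ) :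
    ‖∑ i ∈ s, b i • (hf i).toLp (f i)‖ = ∫ x, ‖∑ i ∈ s, b i • f i x‖ ∂μ := by
  rw [L1.norm_eq_integral_norm]
  refine integral_congr_ae ?_
  have hterm : ∀ᵐ x ∂μ, ∀ i ∈ s, (b i • (hf i).toLp (f i)) x = b i • f i x :=
    (Filter.eventually_all_finset s).2 fun i _ => by
      filter_upwards [Lp.coeFn_smul (b i) ((hf i).toLp (f i)), (hf i).coeFn_toLp] with x h1 h2
      rw [h1, Pi.smul_apply, h2]
  filter_upwards [Lp.coeFn_fun_finsetSum s fun i => b i • (hf i).toLp (f i), hterm]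
    with x hsum hterm
  rw [hsum, sum_congr rfl hterm]

def xPoly (c : Fin N → ℂ) (z : Circle) : Lp ℂ 1 (muT.prod muT) :=
  ∑ n : Fin N, ((z : ℂ) ^ ((n : ℕ) + 1) * c n) • xPow2 ((n : ℕ) + 1)

theorem continuous_xPoly (c : Fin N → ℂ) : Continuous (xPoly c) :=
  continuous_finsetSum _ fun _ _ =>
    ((continuous_subtype_val.pow _).mul continuous_const).smul continuous_const

theorem norm_xPoly (c : Fin N → ℂ) (z : Circle) :
    ‖xPoly c z‖ = ∫ w, ‖torusPoly c (z, w)‖ ∂(muT.prod muT) := by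
  unfold xPoly xPow2
  rw [L1.norm_sum_smul_toLp _ _ fun n : Fin N => memLp_fnPow2 ((n : ℕ) + 1)]
  congr 1 with w
  simp only [torusPoly, coe_torusChar_freq, smul_eq_mul]
  congr! 2 with n
  ring

theorem integral_norm_xPoly (c : Fin N → ℂ) :
    ∫ z, ‖xPoly c z‖ ∂muT = ∫ u, ‖torusPoly c u‖ ∂μ₃ := by
  simp_rw [norm_xPoly]
  exact (integral_prod _ (by simpa using integrable_torusPoly_norm_pow c 1)).symm

theorem integral_norm_xPoly_sq_le (c : Fin N → ℂ) :
    ∫ z, ‖xPoly c z‖ ^ 2 ∂muT ≤ ∫ u, ‖torusPoly c u‖ ^ 2 ∂μ₃ := by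
  rw [integral_prod _ (integrable_torusPoly_norm_pow c 2)]
  refine integral_mono_of_nonneg (ae_of_all _ fun z => by positivity)
    (integrable_torusPoly_norm_pow c 2).integral_prod_left (ae_of_all _ fun z => ?_)
  dsimp only
  rw [norm_xPoly]
  exact sq_integral_le_integral_sq
    (((continuous_torusPoly c).comp (Continuous.prodMk_right z)).norm.memLp_of_hasCompactSupport
      (.of_compactSpace _))

theorem integral_norm_xPoly_sq_le_sum (c : Fin N → ℂ) :
    ∫ z, ‖xPoly c z‖ ^ 2 ∂muT ≤ ∑ n, ‖c n‖ ^ 2 :=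
  (integral_norm_xPoly_sq_le c).trans_eq (integral_norm_torusPoly_sq c)

theorem sum_le_two_mul_integral_norm_xPoly_sq (c : Fin N → ℂ) :
    ∑ n, ‖c n‖ ^ 2 ≤ 2 * ∫ z, ‖xPoly c z‖ ^ 2 ∂muT :=
  calc ∑ n, ‖c n‖ ^ 2 ≤ 2 * (∫ u, ‖torusPoly c u‖ ∂μ₃) ^ 2 :=
        sum_norm_sq_le_integral_norm_torusPoly c
    _ = 2 * (∫ z, ‖xPoly c z‖ ∂muT) ^ 2 := by rw [integral_norm_xPoly]
    _ ≤ 2 * ∫ z, ‖xPoly c z‖ ^ 2 ∂muT := by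
        gcongr
        exact sq_integral_le_integral_sq
          ((continuous_xPoly c).norm.memLp_of_hasCompactSupport (.of_compactSpace _))

theorem Eavg_le {F : (Fin N → Bool) → ℝ} {B : ℝ} (h : ∀ ε, F ε ≤ B) : Eavg N F ≤ B :=
  calc Eavg N F ≤ (2 ^ N : ℝ)⁻¹ * ∑ _ε : Fin N → Bool, B := by
        unfold Eavg; gcongr with ε; exact h ε
    _ = B := by simp

theorem norm_sgn (ε : Fin N → Bool) (n : Fin N) : ‖sgn ε n‖ = 1 := by
  unfold sgn; split_ifs <;> simp

/-- **Example.** For `X = L¹(𝕋²)` and `x_n = w₁^k` (`n = 2^k`), `x_n = w₂^{2^n}` (otherwise),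
the system `(x_n z^n)_n` is RUC in `H_2(𝕋, X)`. -/
theorem stmt10 : ∃ C : ℝ, 1 ≤ C ∧ ∀ (N : ℕ) (a : Fin N → ℂ),
    Eavg N (fun ε => (∫ z : Circle, ‖∑ n : Fin N,
        ((z : ℂ) ^ ((n : ℕ) + 1)) • (sgn ε n • (a n • xPow2 ((n : ℕ) + 1)))‖ ^ (2 : ℝ) ∂muT) ^ ((1 : ℝ) / 2)) ≤
      C * (∫ z : Circle, ‖∑ n : Fin N,
        ((z : ℂ) ^ ((n : ℕ) + 1)) • (a n • xPow2 ((n : ℕ) + 1))‖ ^ (2 : ℝ) ∂muT) ^ ((1 : ℝ) / 2) := by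
  refine ⟨√2, Real.one_le_sqrt.mpr one_le_two, fun N a => Eavg_le fun ε => ?_⟩
  simp only [smul_smul, Real.rpow_two, ← Real.sqrt_eq_rpow]
  calc √(∫ z, ‖xPoly (fun n => sgn ε n * a n) z‖ ^ 2 ∂muT)
      ≤ √(∑ n, ‖sgn ε n * a n‖ ^ 2) := Real.sqrt_le_sqrt (integral_norm_xPoly_sq_le_sum _)
    _ = √(∑ n, ‖a n‖ ^ 2) := by simp only [norm_mul, norm_sgn, one_mul]
    _ ≤ √(2 * ∫ z, ‖xPoly a z‖ ^ 2 ∂muT) :=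
        Real.sqrt_le_sqrt (sum_le_two_mul_integral_norm_xPoly_sq a)
    _ = √2 * √(∫ z, ‖xPoly a z‖ ^ 2 ∂muT) := Real.sqrt_mul zero_le_two _
end
end
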